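/- arXiv:math/0410487 — 5 statements merged into one kernel-verified Lean document; each statement's English description precedes it below -/
import Mathlib

section
/- Let q̂^1, …, q̂^r ∈ m be power series generating the ideal m as an O-module (i.e. q̂^1,…,q̂^r form a formal coordinate system centered at 0). Suppose p̂_1, …, p̂_r are ℂ[ħ]-linear operators on ℂ[ħ][[q]] of the form p̂_a = Σ_b M_{G^b_a}∘(ħθ_b) + M_{F_a}, where the r×r matrix (G^b_a) has entries in O and is invertible over O and F_a ∈ m, and suppose the commutation relations [p̂_a, M_{q̂^b}] = ħ·δ^b_a·M_{q̂^b} and [p̂_a, p̂_b] = 0 hold for all a, b. Then: (i) Σ_c G^c_a·θ_c q̂^b = δ^b_a·q̂^b for all a, b; consequently each θ_b q̂^a is divisible by q̂^a in O, the log-Jacobi matrix H^a_b := (θ_b q̂^a)/q̂^a has entries in O, is invertible over O, and (G^b_a) is its inverse; and (ii) there exists F ∈ m such that F_a = Σ_c G^c_a·θ_c F for all a. -/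
/-!
Work over ℂ.  `OO r = ℂ[[q¹,…,qʳ]]` is the ring of formal power series,
`m` its maximal ideal (power series with zero constant term), and
`θ_a = qᵃ·∂/∂qᵃ` the logarithmic partial derivative.
-/

noncomputable section

/-- `𝒪 = ℂ[[q¹,…,qʳ]]`, the ring of formal power series. -/
abbrev OO (r : ℕ) := MvPowerSeries (Fin r) ℂ

/-- The logarithmic derivative `θ_a = qᵃ ∂/∂qᵃ` on `ℂ[[q]]`:
on the monomial `q^d` it acts by multiplication by `d a`. -/
def thetaO {r : ℕ} (a : Fin r) (F : OO r) : OO r := fun d => (d a : ℂ) * F d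

/-- The constant term at `q = 0`; membership in `m` is `ccO F = 0`. -/
def ccO {r : ℕ} : OO r →+* ℂ := MvPowerSeries.constantCoeff (σ := Fin r) (R := ℂ)

/-- total degree of a monomial exponent -/
def degOf {r : ℕ} (d : Fin r →₀ ℕ) : ℕ := d.sum fun _ k => k

/-- The formal exponential `exp(δ) = Σ_k δ^k/k!` of a power series `δ` with zero
constant term; for such `δ` the coefficient of `q^d` only receives contributions
from `k ≤ |d|`, so the truncated sum below is the full exponential. -/
def fexpO {r : ℕ} (δ : OO r) : OO r :=
  fun d => ∑ k ∈ Finset.range (degOf d + 1), (k.factorial : ℂ)⁻¹ * ((δ ^ k) d)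

/-- `ℂ[ħ][[q¹,…,qʳ]]`: formal power series in `q` with coefficients polynomials in `ħ`. -/
abbrev RR (r : ℕ) := MvPowerSeries (Fin r) (Polynomial ℂ)

/-- The logarithmic derivative `θ_a = qᵃ ∂/∂qᵃ` on `ℂ[ħ][[q]]`. -/
def thetaP {r : ℕ} (a : Fin r) (x : RR r) : RR r :=
  fun d => ((d a : ℕ) : Polynomial ℂ) * x d

/-- `ħ` as an element of `ℂ[ħ][[q]]`. -/
def hbarP (r : ℕ) : RR r := MvPowerSeries.C (σ := Fin r) (R := Polynomial ℂ) Polynomial.X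

/-- The inclusion `ℂ[[q]] → ℂ[ħ][[q]]`. -/
def iotaP {r : ℕ} : OO r →+* RR r :=
  MvPowerSeries.map (σ := Fin r) (Polynomial.C : ℂ →+* Polynomial ℂ)

/-- The first-order operator `p̂_a = Σ_b M_{G^b_a} ∘ (ħ θ_b) + M_{F_a}`
on `ℂ[ħ][[q]]` (it is automatically `ℂ[ħ]`-linear). -/
def phat {r : ℕ} (G : Matrix (Fin r) (Fin r) (OO r)) (F : Fin r → OO r)
    (a : Fin r) (x : RR r) : RR r :=
  (∑ b, iotaP (G b a) * (hbarP r * thetaP b x)) + iotaP (F a) * x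

/-!
On `ℂ[[q]] ⊂ ℂ[ħ][[q]]` the operator `p̂_a` acts as `ħ D_a + F_a` with `D_a = ∑_c G^c_a θ_c`,
so the `ħ`-expansion of the commutation relations gives `D_a q̂^b = δ^b_a q̂^b`,
`[D_a, D_b] = 0` and `D_a F_b = D_b F_a`. Inverting `G` turns the first into
`θ_b q̂^a = H^a_b q̂^a`. The last two say that the form `E = ∑_c E_c dlog q^c` with
`E(D_a) = F_a` is closed; having no constant terms, it is `dF` for a power series `F`.
-/

open Matrix MvPowerSeries

namespace MvPowerSeries

open Finsupp

variable {σ R : Type*} [CommSemiring R]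

variable (R) in
def logPDeriv (i : σ) : Derivation R (MvPowerSeries σ R) (MvPowerSeries σ R) :=
  (X i : MvPowerSeries σ R) • pderiv R i

theorem coeff_logPDeriv (i : σ) (f : MvPowerSeries σ R) (d : σ →₀ ℕ) :
    coeff d (logPDeriv R i f) = d i * coeff d f := by
  classical
  rw [logPDeriv, Derivation.smul_apply, smul_eq_mul, X, coeff_monomial_mul]
  split_ifs with h
  · rw [one_mul, coeff_pderiv, tsub_add_cancel_of_le h, Finsupp.tsub_apply, single_eq_same,
      ← Nat.cast_add_one, Nat.sub_add_cancel (single_le_iff.mp h), mul_comm]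
  · rw [single_le_iff, not_le, Nat.lt_one_iff] at h
    rw [h, Nat.cast_zero, zero_mul]

theorem logPDeriv_X [DecidableEq σ] (i j : σ) :
    logPDeriv R i (X j) = if i = j then X j else 0 := by
  rw [logPDeriv, Derivation.smul_apply, smul_eq_mul]
  split_ifs with h
  · rw [h, pderiv_X_self, mul_one]
  · rw [pderiv_X_of_ne (Ne.symm h), mul_zero]

theorem logPDeriv_map {S : Type*} [CommSemiring S] (φ : R →+* S) (i : σ)
    (f : MvPowerSeries σ R) : logPDeriv S i (map φ f) = map φ (logPDeriv R i f) := by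
  ext d
  rw [coeff_logPDeriv, coeff_map, coeff_map, coeff_logPDeriv, map_mul, map_natCast]

end MvPowerSeries

section Frame

variable {R A ι : Type*} [CommSemiring R] [CommRing A] [Algebra R A] (θ : ι → Derivation R A A)

def jacobian (E : ι → A) : Matrix ι ι A := of fun c c' => θ c (E c')

@[simp]
theorem jacobian_apply (E : ι → A) (c c' : ι) : jacobian θ E c c' = θ c (E c') := rfl

variable [Fintype ι] (G : Matrix ι ι A)

def frameDeriv (a : ι) : Derivation R A A := ∑ c, G c a • θ c

theorem frameDeriv_apply (a : ι) (u : A) : frameDeriv θ G a u = ∑ c, G c a * θ c u := by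
  rw [frameDeriv, ← Derivation.coeFnAddMonoidHom_apply, map_sum, Finset.sum_apply]
  rfl

theorem frameDeriv_eq_vecMul (u : A) :
    (fun a => frameDeriv θ G a u) = (fun c => θ c u) ᵥ* G := by
  ext a
  simp only [frameDeriv_apply, vecMul, dotProduct, mul_comm]

theorem eq_vecMul_frameDeriv [DecidableEq ι] {H : Matrix ι ι A} (hGH : G * H = 1) (u : A) :
    (fun c => θ c u) = (fun a => frameDeriv θ G a u) ᵥ* H := by
  rw [frameDeriv_eq_vecMul, vecMul_vecMul, hGH, vecMul_one]

theorem transpose_mul_jacobian_mul_apply (E : ι → A) (a b : ι) :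
    (Gᵀ * jacobian θ E * G) a b =
      frameDeriv θ G a ((E ᵥ* G) b) - ∑ c, E c * frameDeriv θ G a (G c b) := by
  have lhs : (Gᵀ * jacobian θ E * G) a b = ∑ c, G c b * frameDeriv θ G a (E c) := by
    simp only [mul_apply, transpose_apply, jacobian_apply, frameDeriv_apply, mul_comm]
  have leibniz : frameDeriv θ G a ((E ᵥ* G) b) =
      ∑ c, (E c * frameDeriv θ G a (G c b) + G c b * frameDeriv θ G a (E c)) := by
    simp only [vecMul, dotProduct, map_sum, Derivation.leibniz, smul_eq_mul]
  rw [lhs, leibniz, Finset.sum_add_distrib, add_sub_cancel_left]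

/-- For the form `E` with `E(θ_c) = E_c`, symmetry of the Jacobian is closedness; it is checked
on the frame `D_a`, where `dE(D_a, D_b) = D_a E(D_b) - D_b E(D_a) - E([D_a, D_b])`. -/
theorem isSymm_jacobian_of_frameDeriv_symm [DecidableEq ι] {H : Matrix ι ι A} (hGH : G * H = 1)
    (E : ι → A) (hG : ∀ a b c, frameDeriv θ G a (G c b) = frameDeriv θ G b (G c a))
    (hE : ∀ a b, frameDeriv θ G a ((E ᵥ* G) b) = frameDeriv θ G b ((E ᵥ* G) a)) :
    (jacobian θ E).IsSymm := by
  set J := jacobian θ E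
  have hconj : (Gᵀ * J * G).IsSymm := IsSymm.ext fun a b => by
    rw [transpose_mul_jacobian_mul_apply, transpose_mul_jacobian_mul_apply, hE]
    simp only [hG]
  have hJ : J = Hᵀ * (Gᵀ * J * G) * H := calc
    J = (G * H)ᵀ * J * (G * H) := by rw [hGH, transpose_one, Matrix.one_mul, Matrix.mul_one]
    _ = Hᵀ * (Gᵀ * J * G) * H := by simp only [transpose_mul, Matrix.mul_assoc]
  rw [IsSymm, hJ, transpose_mul, transpose_mul, transpose_transpose, hconj.eq]
  simp only [Matrix.mul_assoc]

end Frame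

namespace MvPowerSeries

variable {σ K : Type*} [Fintype σ] [Field K] [CharZero K]

/-- The Euler operator `∑ θ_i` acts on `q^d` by `|d|`, so `F = (∑ θ_i)⁻¹ ∑ E_i` is a potential;
`0⁻¹ = 0` makes its constant term vanish. -/
theorem exists_logPDeriv_eq_of_isSymm_jacobian (E : σ → MvPowerSeries σ K)
    (hE0 : ∀ i, constantCoeff (E i) = 0)
    (hE : (jacobian (logPDeriv K) E).IsSymm) :
    ∃ F : MvPowerSeries σ K, constantCoeff F = 0 ∧ ∀ i, logPDeriv K i F = E i := by
  let F : MvPowerSeries σ K := fun d => ((Finsupp.degree d : ℕ) : K)⁻¹ * ∑ j, coeff d (E j)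
  have coeff_F (d : σ →₀ ℕ) :
      coeff d F = ((Finsupp.degree d : ℕ) : K)⁻¹ * ∑ j, coeff d (E j) := rfl
  refine ⟨F, by rw [← coeff_zero_eq_constantCoeff_apply, coeff_F]; simp, fun i => ?_⟩
  ext d
  rcases eq_or_ne d 0 with rfl | hd
  · simp [coeff_logPDeriv, hE0]
  have hdeg : ((Finsupp.degree d : ℕ) : K) ≠ 0 :=
    Nat.cast_ne_zero.mpr ((Finsupp.degree_eq_zero_iff d).not.mpr hd)
  have euler : (d i : K) * ∑ j, coeff d (E j) = (Finsupp.degree d : ℕ) * coeff d (E i) := by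
    rw [Finsupp.degree_eq_sum, Nat.cast_sum, Finset.mul_sum, Finset.sum_mul]
    refine Finset.sum_congr rfl fun j _ => ?_
    simpa only [jacobian_apply, coeff_logPDeriv] using congrArg (coeff d) (hE.apply j i)
  rw [coeff_logPDeriv, coeff_F, mul_left_comm, euler, inv_mul_cancel_left₀ hdeg]

end MvPowerSeries

section PowerSeriesFrame

variable {σ R : Type*} [Fintype σ] [DecidableEq σ] [CommRing R]
  (G : Matrix σ σ (MvPowerSeries σ R))

theorem frameDeriv_logPDeriv_X (a e : σ) :
    frameDeriv (logPDeriv R) G a (X e) = G e a * X e := by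
  simp only [frameDeriv_apply, logPDeriv_X, mul_ite, mul_zero, Finset.sum_ite_eq',
    Finset.mem_univ, if_true]

/-- `[D_a, D_b] X_e = (D_a G^e_b - D_b G^e_a) X_e`. -/
theorem frameDeriv_symm_of_commute [IsDomain R]
    (hcomm : ∀ a b u, frameDeriv (logPDeriv R) G a (frameDeriv (logPDeriv R) G b u) =
      frameDeriv (logPDeriv R) G b (frameDeriv (logPDeriv R) G a u)) (a b e : σ) :
    frameDeriv (logPDeriv R) G a (G e b) = frameDeriv (logPDeriv R) G b (G e a) := by
  have h := hcomm a b (X e)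
  simp only [frameDeriv_logPDeriv_X, Derivation.leibniz, smul_eq_mul] at h
  have hX : (X e : MvPowerSeries σ R) ≠ 0 := fun h0 => by
    simpa using congrArg (coeff (Finsupp.single e 1)) h0
  refine mul_left_cancel₀ hX ?_
  linear_combination h

end PowerSeriesFrame

namespace MvPowerSeries

open Polynomial

variable {σ R : Type*} [CommSemiring R]

def hbarCoeff (k : ℕ) : MvPowerSeries σ R[X] →+ MvPowerSeries σ R where
  toFun x d := (coeff d x).coeff k
  map_zero' := by
    ext d
    change (coeff d (0 : MvPowerSeries σ R[X])).coeff k = 0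
    simp
  map_add' x y := by
    ext d
    change (coeff d (x + y)).coeff k = (coeff d x).coeff k + (coeff d y).coeff k
    simp

theorem coeff_hbarCoeff (k : ℕ) (x : MvPowerSeries σ R[X]) (d : σ →₀ ℕ) :
    coeff d (hbarCoeff k x) = (coeff d x).coeff k := rfl

@[simp]
theorem hbarCoeff_map_C (k : ℕ) (u : MvPowerSeries σ R) :
    hbarCoeff k (map Polynomial.C u) = if k = 0 then u else 0 := by
  ext d
  rw [coeff_hbarCoeff, coeff_map, Polynomial.coeff_C]
  split_ifs <;> simp

@[simp]
theorem hbarCoeff_C_X_mul_succ (k : ℕ) (x : MvPowerSeries σ R[X]) :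
    hbarCoeff (k + 1) (C Polynomial.X * x) = hbarCoeff k x := by
  ext d
  rw [coeff_hbarCoeff, coeff_C_mul, Polynomial.coeff_X_mul, coeff_hbarCoeff]

@[simp]
theorem hbarCoeff_zero_C_X_mul (x : MvPowerSeries σ R[X]) :
    hbarCoeff 0 (C Polynomial.X * x) = 0 := by
  ext d
  rw [coeff_hbarCoeff, coeff_C_mul, Polynomial.coeff_X_mul_zero, map_zero]

end MvPowerSeries

theorem thetaO_eq_logPDeriv {r : ℕ} (a : Fin r) : thetaO a = logPDeriv ℂ a := by
  funext F
  exact MvPowerSeries.ext fun d => (coeff_logPDeriv a F d).symm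

theorem thetaP_eq_logPDeriv {r : ℕ} (a : Fin r) : thetaP a = logPDeriv (Polynomial ℂ) a := by
  funext x
  exact MvPowerSeries.ext fun d => (coeff_logPDeriv a x d).symm

section GeneralizedCoordinates

variable {r : ℕ} (G : Matrix (Fin r) (Fin r) (OO r)) (F : Fin r → OO r)

theorem phat_commutator_iotaP (a : Fin r) (u : OO r) (x : RR r) :
    phat G F a (iotaP u * x) - iotaP u * phat G F a x =
      hbarP r * (iotaP (frameDeriv (logPDeriv ℂ) G a u) * x) := by
  have hterm (b : Fin r) : iotaP (G b a) * (hbarP r * thetaP b (iotaP u * x)) =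
      iotaP u * (iotaP (G b a) * (hbarP r * thetaP b x)) +
        hbarP r * (iotaP (G b a * logPDeriv ℂ b u) * x) := by
    rw [thetaP_eq_logPDeriv, Derivation.leibniz, smul_eq_mul, smul_eq_mul, iotaP,
      logPDeriv_map, map_mul]
    ring
  rw [phat, phat, Finset.sum_congr rfl fun b _ => hterm b, Finset.sum_add_distrib,
    ← Finset.mul_sum, ← Finset.mul_sum, ← Finset.sum_mul, frameDeriv_apply, map_sum]
  ring

theorem phat_one (a : Fin r) : phat G F a 1 = iotaP (F a) := by
  simp [phat, thetaP_eq_logPDeriv]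

theorem phat_iotaP (a : Fin r) (g : OO r) :
    phat G F a (iotaP g) =
      hbarP r * iotaP (frameDeriv (logPDeriv ℂ) G a g) + iotaP (F a * g) := by
  have h := phat_commutator_iotaP G F a g 1
  rw [mul_one, mul_one, phat_one] at h
  rw [map_mul]
  linear_combination h

theorem phat_add (a : Fin r) (x y : RR r) :
    phat G F a (x + y) = phat G F a x + phat G F a y := by
  simp only [phat, thetaP_eq_logPDeriv, map_add, mul_add, Finset.sum_add_distrib]
  ring

theorem phat_hbarP_mul (a : Fin r) (x : RR r) :
    phat G F a (hbarP r * x) = hbarP r * phat G F a x := by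
  have hθ (b : Fin r) : thetaP b (hbarP r * x) = hbarP r * thetaP b x := by
    rw [thetaP_eq_logPDeriv, hbarP, ← smul_eq_C_mul, Derivation.map_smul, smul_eq_C_mul]
  simp only [phat, hθ, mul_add, Finset.mul_sum, mul_left_comm (hbarP r)]

theorem phat_phat_iotaP (a b : Fin r) (g : OO r) :
    phat G F a (phat G F b (iotaP g)) =
      hbarP r * (hbarP r *
          iotaP (frameDeriv (logPDeriv ℂ) G a (frameDeriv (logPDeriv ℂ) G b g)))
        + hbarP r * iotaP (frameDeriv (logPDeriv ℂ) G a (F b * g)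
          + F a * frameDeriv (logPDeriv ℂ) G b g)
        + iotaP (F a * (F b * g)) := by
  rw [phat_iotaP, phat_add, phat_hbarP_mul, phat_iotaP, phat_iotaP, map_add]
  ring

theorem frameDeriv_qhat_of_phat_commutator (qhat : Fin r → OO r)
    (hcomm1 : ∀ a b x, phat G F a (iotaP (qhat b) * x) - iotaP (qhat b) * phat G F a x =
      if b = a then hbarP r * (iotaP (qhat b) * x) else 0) (a b : Fin r) :
    frameDeriv (logPDeriv ℂ) G a (qhat b) = if a = b then qhat b else 0 := by
  have h := congrArg (hbarCoeff 1) (hcomm1 a b 1)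
  rw [phat_commutator_iotaP, mul_one, mul_one] at h
  simpa [hbarP, iotaP, apply_ite, eq_comm] using h

theorem frameDeriv_commute_of_phat_commute
    (hcomm2 : ∀ a b x, phat G F a (phat G F b x) = phat G F b (phat G F a x)) (a b : Fin r)
    (u : OO r) :
    frameDeriv (logPDeriv ℂ) G a (frameDeriv (logPDeriv ℂ) G b u) =
      frameDeriv (logPDeriv ℂ) G b (frameDeriv (logPDeriv ℂ) G a u) := by
  have h := congrArg (hbarCoeff 2) (hcomm2 a b (iotaP u))
  rw [phat_phat_iotaP, phat_phat_iotaP] at h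
  simp only [hbarP, iotaP, map_add, hbarCoeff_C_X_mul_succ, hbarCoeff_map_C] at h
  simpa using h

theorem frameDeriv_symm_of_phat_commute
    (hcomm2 : ∀ a b x, phat G F a (phat G F b x) = phat G F b (phat G F a x)) (a b : Fin r) :
    frameDeriv (logPDeriv ℂ) G a (F b) = frameDeriv (logPDeriv ℂ) G b (F a) := by
  have h := congrArg (hbarCoeff 1) (hcomm2 a b 1)
  rw [← map_one iotaP, phat_phat_iotaP, phat_phat_iotaP] at h
  simp only [hbarP, iotaP, map_add, hbarCoeff_C_X_mul_succ, hbarCoeff_zero_C_X_mul,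
    hbarCoeff_map_C] at h
  simpa using h

end GeneralizedCoordinates

theorem generalized_coordinates_structure_general {r : ℕ}
    (qhat : Fin r → OO r)
    (G : Matrix (Fin r) (Fin r) (OO r)) (hGunit : IsUnit G)
    (F : Fin r → OO r) (hF : ∀ a, ccO (F a) = 0)
    (hcomm1 : ∀ a b x, phat G F a (iotaP (qhat b) * x) - iotaP (qhat b) * phat G F a x =
      if b = a then hbarP r * (iotaP (qhat b) * x) else 0)
    (hcomm2 : ∀ a b x, phat G F a (phat G F b x) = phat G F b (phat G F a x)) :
    (∀ a b, (∑ c, G c a * thetaO c (qhat b)) = if a = b then qhat b else 0) ∧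
    (∃ H : Matrix (Fin r) (Fin r) (OO r),
      (∀ a b, thetaO b (qhat a) = H a b * qhat a) ∧ H * G = 1 ∧ G * H = 1) ∧
    (∃ F' : OO r, ccO F' = 0 ∧ ∀ a, F a = ∑ c, G c a * thetaO c F') := by
  have hdet := (isUnit_iff_isUnit_det G).mp hGunit
  obtain ⟨H, hHG, hGH⟩ : ∃ H, H * G = 1 ∧ G * H = 1 :=
    ⟨G⁻¹, nonsing_inv_mul G hdet, mul_nonsing_inv G hdet⟩
  have hqhat := frameDeriv_qhat_of_phat_commutator G F qhat hcomm1
  simp only [thetaO_eq_logPDeriv, ← frameDeriv_apply]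
  refine ⟨hqhat, ⟨H, fun a b => ?_, hHG, hGH⟩, ?_⟩
  · rw [congrFun (eq_vecMul_frameDeriv (logPDeriv ℂ) G hGH (qhat a)) b]
    simp [vecMul, dotProduct, hqhat, mul_comm]
  have hE0 : ∀ c, constantCoeff ((F ᵥ* H) c) = 0 := fun c => by
    simp [vecMul, dotProduct, show ∀ a, constantCoeff (F a) = 0 from hF]
  have hEG : F ᵥ* H ᵥ* G = F := by rw [vecMul_vecMul, hHG, vecMul_one]
  have hclosed := isSymm_jacobian_of_frameDeriv_symm (logPDeriv ℂ) G hGH (F ᵥ* H)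
    (frameDeriv_symm_of_commute G (frameDeriv_commute_of_phat_commute G F hcomm2))
    (by simpa only [hEG] using frameDeriv_symm_of_phat_commute G F hcomm2)
  obtain ⟨F', hF'0, hF'⟩ := exists_logPDeriv_eq_of_isSymm_jacobian (F ᵥ* H) hE0 hclosed
  refine ⟨F', hF'0, fun a => ?_⟩
  have h := congrFun (frameDeriv_eq_vecMul (logPDeriv ℂ) G F') a
  simp only [hF', hEG] at h
  exact h.symm

/-- **Structure of generalized coordinates** (Proposition 3.1).  Let
`q̂¹,…,q̂ʳ ∈ m` generate `m` as an `𝒪`-module and let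
`p̂_a = Σ_b M_{G^b_a}∘(ħθ_b) + M_{F_a}` (with `(G^b_a)` invertible over `𝒪` and
`F_a ∈ m`) satisfy `[p̂_a, M_{q̂^b}] = ħδ^b_a M_{q̂^b}` and `[p̂_a, p̂_b] = 0`.
Then (i) `Σ_c G^c_a θ_c q̂^b = δ^b_a q̂^b`; each `θ_b q̂^a` is divisible by `q̂^a`,
the log-Jacobi matrix `H^a_b = (θ_b q̂^a)/q̂^a` has entries in `𝒪` and is inverse
to `G`; and (ii) there is `F ∈ m` with `F_a = Σ_c G^c_a θ_c F` for all `a`. -/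
theorem generalized_coordinates_structure {r : ℕ} (hr : 1 ≤ r)
    (qhat : Fin r → OO r)
    (hgen : Ideal.span (Set.range qhat) =
      RingHom.ker (MvPowerSeries.constantCoeff (σ := Fin r) (R := ℂ)))
    (G : Matrix (Fin r) (Fin r) (OO r)) (hGunit : IsUnit G)
    (F : Fin r → OO r) (hF : ∀ a, ccO (F a) = 0)
    (hcomm1 : ∀ a b x, phat G F a (iotaP (qhat b) * x) - iotaP (qhat b) * phat G F a x =
      if b = a then hbarP r * (iotaP (qhat b) * x) else 0)
    (hcomm2 : ∀ a b x, phat G F a (phat G F b x) = phat G F b (phat G F a x)) :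
    (∀ a b, (∑ c, G c a * thetaO c (qhat b)) = if a = b then qhat b else 0) ∧
    (∃ H : Matrix (Fin r) (Fin r) (OO r),
      (∀ a b, thetaO b (qhat a) = H a b * qhat a) ∧ H * G = 1 ∧ G * H = 1) ∧
    (∃ F' : OO r, ccO F' = 0 ∧ ∀ a, F a = ∑ c, G c a * thetaO c F') :=
  generalized_coordinates_structure_general qhat G hGunit F hF hcomm1 hcomm2
end
end

section
/- Let S ∈ Mat_n(ℂ[ħ,ħ^{-1}]][[q^1,…,q^r]]) satisfy S|_{q=0} = Id. Then there exists a unique pair of matrices (S_+, S_−) with S = S_+·S_−, where S_+ ∈ Mat_n(ℂ[ħ][[q]]) and S_− ∈ Mat_n(ℂ[[ħ^{-1}]][[q]]) with S_− ≡ Id modulo ħ^{-1} (i.e. the coefficient of ħ^0 in S_− is the identity matrix and S_− has no positive powers of ħ). Moreover this factorization automatically satisfies S_+|_{q=0} = Id and S_−|_{q=0} = Id. -/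
/-!
Work over ℂ.  We represent the coefficient ring `ℂ[ħ,ħ⁻¹]]` (formal Laurent
series `Σ_{k ≤ K} c_k ħ^k` with finitely many positive powers of `ħ`) as
`LaurentSeries ℂ` in the variable `t = ħ⁻¹`; thus the coefficient of `t^k`
is the coefficient of `ħ^{-k}`.  `AA r = ℂ[ħ,ħ⁻¹]][[q¹,…,qʳ]]`, and
`θ_a = qᵃ·∂/∂qᵃ` is the logarithmic partial derivative.
-/

noncomputable section

/-- `ℂ[ħ,ħ⁻¹]]`, realized as Laurent series in `t = ħ⁻¹`. -/
abbrev LS := LaurentSeries ℂ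

/-- `ħ = t⁻¹` where `t` is the `LaurentSeries` variable. -/
def hbarL : LS := HahnSeries.single (-1 : ℤ) (1 : ℂ)

/-- `ℂ[ħ,ħ⁻¹]][[q¹,…,qʳ]]`. -/
abbrev AA (r : ℕ) := MvPowerSeries (Fin r) LS

/-- The logarithmic derivative `θ_a = qᵃ ∂/∂qᵃ`:
on the monomial `q^d` it acts by multiplication by `d a`. -/
def thetaA {r : ℕ} (a : Fin r) (x : AA r) : AA r := fun d => (d a : LS) * x d

/-- `θ_a` acting entrywise on matrices. -/
def thetaMat {r n : ℕ} (a : Fin r) (M : Matrix (Fin n) (Fin n) (AA r)) :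
    Matrix (Fin n) (Fin n) (AA r) :=
  Matrix.of fun i j => thetaA a (M i j)

/-- `ħ` as an element of `ℂ[ħ,ħ⁻¹]][[q]]`. -/
def hbarA (r : ℕ) : AA r := (MvPowerSeries.C : LS →+* AA r) hbarL

/-- The constant term at `q = 0`. -/
def ccA {r : ℕ} : AA r →+* LS := (MvPowerSeries.constantCoeff : AA r →+* LS)

/-- The embedding `ℂ → ℂ[ħ,ħ⁻¹]][[q]]`. -/
def cA (r : ℕ) : ℂ →+* AA r := (MvPowerSeries.C : LS →+* AA r).comp HahnSeries.C

/-- `x ∈ ℂ[ħ]`: `x` is a polynomial in `ħ` (no negative powers of `ħ`,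
i.e. no positive powers of `t`; finiteness is automatic for Laurent series). -/
def isPolyH (x : LS) : Prop := ∀ k : ℤ, 0 < k → x.coeff k = 0

/-- `x ∈ ℂ[[ħ⁻¹]]`: `x` is regular at `ħ = ∞` (no positive powers of `ħ`). -/
def isRegH (x : LS) : Prop := ∀ k : ℤ, k < 0 → x.coeff k = 0

/-- `x ∈ ℂ`: `x` is a constant, independent of `ħ`. -/
def isConstH (x : LS) : Prop := ∀ k : ℤ, k ≠ 0 → x.coeff k = 0

/-- A matrix over `ℂ[ħ,ħ⁻¹]][[q]]` has entries in `ℂ[ħ][[q]]`. -/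
def MatPolyH {r n : ℕ} (M : Matrix (Fin n) (Fin n) (AA r)) : Prop :=
  ∀ i j d, isPolyH (M i j d)

/-- A matrix over `ℂ[ħ,ħ⁻¹]][[q]]` has entries in `ℂ[[ħ⁻¹]][[q]]`. -/
def MatRegH {r n : ℕ} (M : Matrix (Fin n) (Fin n) (AA r)) : Prop :=
  ∀ i j d, isRegH (M i j d)

/-- A matrix over `ℂ[ħ,ħ⁻¹]][[q]]` has entries in `ℂ[[q]]`,
i.e. is independent of `ħ`. -/
def MatConstH {r n : ℕ} (M : Matrix (Fin n) (Fin n) (AA r)) : Prop :=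
  ∀ i j d, isConstH (M i j d)

/-- Flatness: `ħ(θ_aΩ_b − θ_bΩ_a) + Ω_aΩ_b − Ω_bΩ_a = 0` for all `a, b`. -/
def IsFlat {r n : ℕ} (Ω : Fin r → Matrix (Fin n) (Fin n) (AA r)) : Prop :=
  ∀ a b, hbarA r • (thetaMat a (Ω b) - thetaMat b (Ω a)) + (Ω a * Ω b - Ω b * Ω a) = 0

/-- `(S₊, S₋)` is a Birkhoff factorization of `S`:
`S = S₊·S₋` with `S₊ ∈ Mat_n(ℂ[ħ][[q]])`, `S₋ ∈ Mat_n(ℂ[[ħ⁻¹]][[q]])`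
and `S₋ ≡ Id` modulo `ħ⁻¹` (the coefficient of `ħ^0` in `S₋` is the
identity matrix over `ℂ[[q]]`). -/
def IsBirkhoffFactorization {r n : ℕ} (S Sp Sm : Matrix (Fin n) (Fin n) (AA r)) : Prop :=
  MatPolyH Sp ∧ MatRegH Sm ∧
  (∀ i j d, (Sm i j d).coeff 0 =
    MvPowerSeries.coeff d ((1 : Matrix (Fin n) (Fin n) (MvPowerSeries (Fin r) ℂ)) i j)) ∧
  S = Sp * Sm

/-!
Comparing coefficients of `q^d` in `S = S₊·S₋` gives `S_d = ∑_{a+b=d} (S₊)_a (S₋)_b`.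
At `d = 0` the equation `1 = (S₊)_0 (S₋)_0` forces both factors to be `1`: a lowest negative
power of `ħ⁻¹` in `(S₊)_0` would survive in the product, because `(S₋)_0 ≡ 1 mod ħ⁻¹`.
For `d ≠ 0` it reads `(S₊)_d + (S₋)_d = S_d - ∑_{a,b ≠ 0} (S₊)_a (S₋)_b`, whose right side only
involves lower degrees, and `ℂ[ħ,ħ⁻¹]] = ℂ[ħ] ⊕ ħ⁻¹ℂ[[ħ⁻¹]]`. So the factors are determined,
and can be constructed, degree by degree. Only this additive splitting enters: the same recursion
factors any power series with constant term `1` over a ring `A` relative to any decomposition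
`A = P ⊕ M` into additive subgroups.
-/

open MvPowerSeries Finset.HasAntidiagonal

lemma AddSubgroup.codisjoint_iff_exists_add_eq {A : Type*} [AddCommGroup A]
    {P M : AddSubgroup A} : Codisjoint P M ↔ ∀ a, ∃ p ∈ P, ∃ m ∈ M, p + m = a := by
  rw [codisjoint_iff, eq_top_iff]
  exact ⟨fun h a => AddSubgroup.mem_sup.1 (h (AddSubgroup.mem_top a)),
    fun h a _ => AddSubgroup.mem_sup.2 (h a)⟩

lemma AddSubgroup.isCompl_matrix {m n A : Type*} [AddCommGroup A] {P M : AddSubgroup A}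
    (h : IsCompl P M) : IsCompl (P.matrix : AddSubgroup (Matrix m n A)) M.matrix := by
  refine ⟨AddSubgroup.disjoint_def.2 fun hP hM => Matrix.ext fun i j =>
    AddSubgroup.disjoint_def.1 h.disjoint (hP i j) (hM i j), ?_⟩
  choose p hp m hm hpm using AddSubgroup.codisjoint_iff_exists_add_eq.1 h.codisjoint
  exact AddSubgroup.codisjoint_iff_exists_add_eq.2 fun X =>
    ⟨X.map p, fun i j => hp _, X.map m, fun i j => hm _, Matrix.ext fun i j => hpm _⟩

section SplitFactorization

variable {σ A : Type*} [Ring A] (P M : AddSubgroup A)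

structure IsSplitFactorization (F X Y : MvPowerSeries σ A) : Prop where
  constantCoeff_left : constantCoeff X = 1
  constantCoeff_right : constantCoeff Y = 1
  coeff_left_mem : ∀ d ≠ 0, coeff d X ∈ P
  coeff_right_mem : ∀ d ≠ 0, coeff d Y ∈ M
  eq_mul : F = X * Y

def innerAntidiagonal [DecidableEq σ] (d : σ →₀ ℕ) : Finset ((σ →₀ ℕ) × (σ →₀ ℕ)) :=
  (antidiagonal d).filter fun p => p.1 ≠ 0 ∧ p.2 ≠ 0

variable {P M}

lemma lt_of_mem_innerAntidiagonal [DecidableEq σ] {d : σ →₀ ℕ} {p : (σ →₀ ℕ) × (σ →₀ ℕ)}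
    (hp : p ∈ innerAntidiagonal d) : p.1 < d ∧ p.2 < d := by
  obtain ⟨hsum, h1, h2⟩ := Finset.mem_filter.1 hp
  rw [mem_antidiagonal] at hsum
  subst hsum
  exact ⟨lt_add_of_pos_right _ (pos_iff_ne_zero.2 h2), lt_add_of_pos_left _ (pos_iff_ne_zero.2 h1)⟩

lemma sum_antidiagonal_eq_add_add_sum_innerAntidiagonal [DecidableEq σ] {B : Type*}
    [AddCommMonoid B] {d : σ →₀ ℕ} (hd : d ≠ 0) (f : (σ →₀ ℕ) × (σ →₀ ℕ) → B) :
    ∑ p ∈ antidiagonal d, f p = f (d, 0) + f (0, d) + ∑ p ∈ innerAntidiagonal d, f p := by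
  have hboundary :
      (antidiagonal d).filter (fun p => ¬(p.1 ≠ 0 ∧ p.2 ≠ 0)) = {(d, 0), (0, d)} := by
    ext ⟨a, b⟩
    simp only [Finset.mem_filter, mem_antidiagonal, Finset.mem_insert, Finset.mem_singleton,
      Prod.mk.injEq]
    constructor
    · rintro ⟨rfl, hab⟩
      rw [not_and_or, not_not, not_not] at hab
      rcases hab with rfl | rfl <;> simp
    · rintro (⟨rfl, rfl⟩ | ⟨rfl, rfl⟩) <;> simp
  rw [← Finset.sum_filter_add_sum_filter_not _ (fun p => p.1 ≠ 0 ∧ p.2 ≠ 0), add_comm,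
    hboundary, Finset.sum_pair (by simpa [eq_comm] using hd), innerAntidiagonal]

lemma coeff_mul_eq_add_add_sum_innerAntidiagonal [DecidableEq σ] {X Y : MvPowerSeries σ A}
    (hX : constantCoeff X = 1) (hY : constantCoeff Y = 1) {d : σ →₀ ℕ} (hd : d ≠ 0) :
    coeff d (X * Y) =
      coeff d X + coeff d Y + ∑ p ∈ innerAntidiagonal d, coeff p.1 X * coeff p.2 Y := by
  rw [coeff_mul, sum_antidiagonal_eq_add_add_sum_innerAntidiagonal hd,
    coeff_zero_eq_constantCoeff_apply, coeff_zero_eq_constantCoeff_apply, hX, hY, mul_one, one_mul]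

theorem IsSplitFactorization.unique (hPM : Disjoint P M) {F X Y X' Y' : MvPowerSeries σ A}
    (h : IsSplitFactorization P M F X Y) (h' : IsSplitFactorization P M F X' Y') :
    X = X' ∧ Y = Y' := by
  classical
  suffices ∀ d, coeff d X = coeff d X' ∧ coeff d Y = coeff d Y' from
    ⟨ext fun d => (this d).1, ext fun d => (this d).2⟩
  intro d
  induction d using WellFoundedLT.induction with
  | _ d ih =>
  rcases eq_or_ne d 0 with rfl | hd
  · simp only [coeff_zero_eq_constantCoeff_apply, h.constantCoeff_left, h.constantCoeff_right,
      h'.constantCoeff_left, h'.constantCoeff_right, and_self]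
  have hsum : coeff d X + coeff d Y = coeff d X' + coeff d Y' := by
    have hF := congrArg (coeff d) (h.eq_mul.symm.trans h'.eq_mul)
    rwa [coeff_mul_eq_add_add_sum_innerAntidiagonal h.constantCoeff_left h.constantCoeff_right hd,
      coeff_mul_eq_add_add_sum_innerAntidiagonal h'.constantCoeff_left h'.constantCoeff_right hd,
      Finset.sum_congr rfl fun p hp => by
        rw [(ih _ (lt_of_mem_innerAntidiagonal hp).1).1,
          (ih _ (lt_of_mem_innerAntidiagonal hp).2).2],
      add_left_inj] at hF
  have hXP : coeff d X - coeff d X' ∈ P :=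
    sub_mem (h.coeff_left_mem d hd) (h'.coeff_left_mem d hd)
  have hXM : coeff d X - coeff d X' ∈ M := by
    rw [sub_eq_sub_iff_add_eq_add.2 (hsum.trans (add_comm _ _))]
    exact sub_mem (h'.coeff_right_mem d hd) (h.coeff_right_mem d hd)
  have hX : coeff d X = coeff d X' := sub_eq_zero.1 (AddSubgroup.disjoint_def.1 hPM hXP hXM)
  rw [hX, add_right_inj] at hsum
  exact ⟨hX, hsum⟩

/-- The `d`-th coefficients of the two factors are the two components, under `π`, of the value
that `F = X * Y` forces on `coeff d X + coeff d Y` once the lower coefficients are known. -/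
def splitFactorCoeffs [DecidableEq σ] (π : A → A) (F : MvPowerSeries σ A) :
    (σ →₀ ℕ) → A × A
  | d =>
    if d = 0 then (1, 1)
    else
      let R := coeff d F - ∑ p ∈ (innerAntidiagonal d).attach,
        (splitFactorCoeffs π F p.1.1).1 * (splitFactorCoeffs π F p.1.2).2
      (π R, R - π R)
termination_by d => d
decreasing_by
  exacts [(lt_of_mem_innerAntidiagonal p.2).1, (lt_of_mem_innerAntidiagonal p.2).2]

section splitFactorCoeffs

variable [DecidableEq σ] (π : A → A) (F : MvPowerSeries σ A)

lemma splitFactorCoeffs_zero : splitFactorCoeffs π F 0 = (1, 1) := by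
  rw [splitFactorCoeffs, if_pos rfl]

lemma splitFactorCoeffs_of_ne_zero {d : σ →₀ ℕ} (hd : d ≠ 0) :
    ∃ R, splitFactorCoeffs π F d = (π R, R - π R) ∧ R = coeff d F - ∑ p ∈ innerAntidiagonal d,
      (splitFactorCoeffs π F p.1).1 * (splitFactorCoeffs π F p.2).2 := by
  rw [splitFactorCoeffs, if_neg hd]
  exact ⟨_, rfl, congrArg _ (Finset.sum_attach (innerAntidiagonal d)
    fun p => (splitFactorCoeffs π F p.1).1 * (splitFactorCoeffs π F p.2).2)⟩

end splitFactorCoeffs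

theorem exists_isSplitFactorization (hPM : Codisjoint P M) {F : MvPowerSeries σ A}
    (hF : constantCoeff F = 1) : ∃ X Y, IsSplitFactorization P M F X Y := by
  classical
  choose π hπP m hm hπm using AddSubgroup.codisjoint_iff_exists_add_eq.1 hPM
  have hπM (a : A) : a - π a ∈ M := by rw [← eq_sub_of_add_eq' (hπm a)]; exact hm a
  let X : MvPowerSeries σ A := fun d => (splitFactorCoeffs π F d).1
  let Y : MvPowerSeries σ A := fun d => (splitFactorCoeffs π F d).2
  have hX0 : constantCoeff X = 1 := congrArg Prod.fst (splitFactorCoeffs_zero π F)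
  have hY0 : constantCoeff Y = 1 := congrArg Prod.snd (splitFactorCoeffs_zero π F)
  refine ⟨X, Y, ⟨hX0, hY0, fun d hd => ?_, fun d hd => ?_, ?_⟩⟩
  · obtain ⟨R, hR, -⟩ := splitFactorCoeffs_of_ne_zero π F hd
    show (splitFactorCoeffs π F d).1 ∈ P
    exact hR ▸ hπP R
  · obtain ⟨R, hR, -⟩ := splitFactorCoeffs_of_ne_zero π F hd
    show (splitFactorCoeffs π F d).2 ∈ M
    exact hR ▸ hπM R
  · ext d
    rcases eq_or_ne d 0 with rfl | hd
    · simp only [coeff_zero_eq_constantCoeff_apply, map_mul, hF, hX0, hY0, mul_one]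
    · rw [coeff_mul_eq_add_add_sum_innerAntidiagonal hX0 hY0 hd]
      obtain ⟨R, hR, hRF⟩ := splitFactorCoeffs_of_ne_zero π F hd
      show coeff d F = (splitFactorCoeffs π F d).1 + (splitFactorCoeffs π F d).2 + _
      rw [hR, add_sub_cancel, hRF]
      exact (sub_add_cancel _ _).symm

theorem existsUnique_isSplitFactorization (hPM : IsCompl P M) {F : MvPowerSeries σ A}
    (hF : constantCoeff F = 1) :
    ∃! XY : MvPowerSeries σ A × MvPowerSeries σ A, IsSplitFactorization P M F XY.1 XY.2 := by
  obtain ⟨X, Y, h⟩ := exists_isSplitFactorization hPM.codisjoint hF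
  refine ⟨(X, Y), h, fun XY' h' => ?_⟩
  obtain ⟨hX, hY⟩ := h'.unique hPM.disjoint h
  exact Prod.ext hX hY

end SplitFactorization

def matrixMvPowerSeriesEquiv (σ R n : Type*) [Semiring R] [Fintype n] [DecidableEq n] :
    Matrix n n (MvPowerSeries σ R) ≃+* MvPowerSeries σ (Matrix n n R) where
  toFun M d := M.map (coeff d)
  invFun X := Matrix.of fun i j => (fun d => X d i j : MvPowerSeries σ R)
  left_inv _ := rfl
  right_inv _ := rfl
  map_mul' M N := by
    classical
    refine MvPowerSeries.ext fun d => Eq.trans ?_ (coeff_mul d _ _).symm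
    change (M * N).map (coeff d) = ∑ p ∈ antidiagonal d, M.map (coeff p.1) * N.map (coeff p.2)
    ext i j
    simp only [Matrix.map_apply, Matrix.mul_apply, map_sum, coeff_mul, Matrix.sum_apply]
    exact Finset.sum_comm
  map_add' _ _ := rfl

lemma coeff_matrix_one_apply {σ R n : Type*} [Semiring R] [DecidableEq σ] [DecidableEq n]
    (d : σ →₀ ℕ) (i j : n) :
    coeff d ((1 : Matrix n n (MvPowerSeries σ R)) i j) =
      if d = 0 then (1 : Matrix n n R) i j else 0 := by
  rw [Matrix.one_apply, Matrix.one_apply]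
  split_ifs <;> simp [coeff_one, *]

section LaurentSeries

def polyHSubgroup : AddSubgroup LS where
  carrier := {x | isPolyH x}
  add_mem' hx hy k hk := by rw [HahnSeries.coeff_add, hx k hk, hy k hk, add_zero]
  zero_mem' _ _ := HahnSeries.coeff_zero
  neg_mem' hx k hk := by rw [HahnSeries.coeff_neg, hx k hk, neg_zero]

/-- `ħ⁻¹ℂ[[ħ⁻¹]]`: only strictly positive powers of `t = ħ⁻¹`. -/
def negHSubgroup : AddSubgroup LS where
  carrier := {x | ∀ k ≤ 0, x.coeff k = 0}
  add_mem' hx hy k hk := by rw [HahnSeries.coeff_add, hx k hk, hy k hk, add_zero]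
  zero_mem' _ _ := HahnSeries.coeff_zero
  neg_mem' hx k hk := by rw [HahnSeries.coeff_neg, hx k hk, neg_zero]

lemma mem_negHSubgroup_iff {x : LS} : x ∈ negHSubgroup ↔ isRegH x ∧ x.coeff 0 = 0 :=
  ⟨fun h => ⟨fun k hk => h k hk.le, h 0 le_rfl⟩, fun ⟨hreg, h0⟩ k hk =>
    (eq_or_lt_of_le hk).elim (fun hk => hk ▸ h0) (hreg k)⟩

theorem isCompl_polyHSubgroup_negHSubgroup : IsCompl polyHSubgroup negHSubgroup := by
  refine ⟨AddSubgroup.disjoint_def.2 fun {x} hP hM => ?_,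
    AddSubgroup.codisjoint_iff_exists_add_eq.2 fun x =>
      ⟨HahnSeries.truncLT 1 x, ?_, x - HahnSeries.truncLT 1 x, ?_, add_sub_cancel _ _⟩⟩
  · ext k
    rcases le_or_gt k 0 with hk | hk
    exacts [hM k hk, hP k hk]
  · intro k hk
    rw [HahnSeries.coeff_truncLT, if_neg (by omega)]
  · intro k hk
    rw [HahnSeries.coeff_sub, HahnSeries.coeff_truncLT, if_pos (by omega), sub_self]

lemma eq_C_of_isConstH {x : LS} (hx : isConstH x) : x = HahnSeries.C (x.coeff 0) := by
  ext k
  rcases eq_or_ne k 0 with rfl | hk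
  · rw [HahnSeries.C_apply, HahnSeries.coeff_single_same]
  · rw [HahnSeries.C_apply, HahnSeries.coeff_single_of_ne hk, hx k hk]

lemma coeff_mul_of_forall_lt_eq_zero {x y : LS} {m : ℤ} (hx : ∀ k < m, x.coeff k = 0)
    (hy : isRegH y) : (x * y).coeff m = x.coeff m * y.coeff 0 := by
  rw [HahnSeries.coeff_mul]
  refine Finset.sum_eq_single (m, 0) (fun b hb hne => ?_) (fun h => ?_)
  · obtain ⟨h1, h2, h3⟩ := Finset.mem_antidiagonal.1 hb
    have : m ≤ b.1 := not_lt.1 fun h => h1 (hx _ h)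
    have : 0 ≤ b.2 := not_lt.1 fun h => h2 (hy _ h)
    exact absurd (Prod.ext (by omega) (by omega)) hne
  · by_contra hne
    exact h (Finset.mem_antidiagonal.2
      ⟨left_ne_zero_of_mul hne, right_ne_zero_of_mul hne, add_zero m⟩)

variable {n : Type*}

lemma map_coeff_one [DecidableEq n] (k : ℤ) :
    (1 : Matrix n n LS).map (·.coeff k) = if k = 0 then 1 else 0 := by
  split_ifs with hk
  · exact hk ▸ Matrix.map_one _ HahnSeries.coeff_zero (by rw [HahnSeries.coeff_one, if_pos rfl])
  · ext i j
    rw [Matrix.map_apply, Matrix.one_apply]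
    split_ifs <;> simp [HahnSeries.coeff_one, hk]

lemma isConstH_one_apply [DecidableEq n] (i j : n) : isConstH ((1 : Matrix n n LS) i j) :=
  fun k hk => by simpa [hk] using congrFun (congrFun (map_coeff_one (n := n) k) i) j

variable [Fintype n]

lemma map_coeff_mul_of_forall_lt_eq_zero {A B : Matrix n n LS} {m : ℤ}
    (hA : ∀ i j, ∀ k < m, (A i j).coeff k = 0) (hB : ∀ i j, isRegH (B i j)) :
    (A * B).map (·.coeff m) = A.map (·.coeff m) * B.map (·.coeff 0) := by
  ext i j
  simp only [Matrix.map_apply, Matrix.mul_apply, HahnSeries.coeff_sum,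
    coeff_mul_of_forall_lt_eq_zero (hA i _) (hB _ j)]

theorem eq_one_of_isPolyH_of_isRegH_of_mul_eq_one [DecidableEq n] {A B : Matrix n n LS}
    (hA : ∀ i j, isPolyH (A i j)) (hB : ∀ i j, isRegH (B i j)) (hB0 : B.map (·.coeff 0) = 1)
    (hAB : A * B = 1) : A = 1 := by
  have hnonneg : ∀ i j, 0 ≤ (A i j).order := by
    by_contra! ⟨i, j, hij⟩
    obtain ⟨⟨i₀, j₀⟩, -, hmin⟩ := Finset.exists_min_image Finset.univ
      (fun p : n × n => (A p.1 p.2).order) ⟨(i, j), Finset.mem_univ _⟩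
    have hm : (A i₀ j₀).order < 0 := (hmin (i, j) (Finset.mem_univ _)).trans_lt hij
    have hlow : ∀ i j, ∀ k < (A i₀ j₀).order, (A i j).coeff k = 0 := fun i j k hk =>
      HahnSeries.coeff_eq_zero_of_lt_order (hk.trans_le (hmin (i, j) (Finset.mem_univ _)))
    have h := map_coeff_mul_of_forall_lt_eq_zero hlow hB
    rw [hAB, hB0, Matrix.mul_one, map_coeff_one, if_neg hm.ne] at h
    have hA₀ : A i₀ j₀ ≠ 0 := fun h0 => hm.ne (by rw [h0, HahnSeries.order_zero])
    exact hA₀ (HahnSeries.coeff_order_eq_zero.1 (congrFun (congrFun h i₀) j₀).symm)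
  have hconst : ∀ i j, isConstH (A i j) := fun i j k hk => (lt_or_gt_of_ne hk).elim
    (fun h => HahnSeries.coeff_eq_zero_of_lt_order (h.trans_le (hnonneg i j))) (hA i j k)
  have h0 := map_coeff_mul_of_forall_lt_eq_zero (m := 0) (fun i j k hk => hconst i j k hk.ne) hB
  rw [hAB, hB0, Matrix.mul_one, map_coeff_one, if_pos rfl] at h0
  calc A = (A.map (·.coeff 0)).map HahnSeries.C := by
        ext1 i j; exact eq_C_of_isConstH (hconst i j)
    _ = 1 := by rw [← h0, Matrix.map_one _ (map_zero _) (map_one _)]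

end LaurentSeries

section Birkhoff

variable {r n : ℕ}

local notation "𝔢" => matrixMvPowerSeriesEquiv (Fin r) LS (Fin n)

lemma constantCoeff_matrixMvPowerSeriesEquiv (M : Matrix (Fin n) (Fin n) (AA r)) :
    constantCoeff (𝔢 M) = M.map ccA :=
  rfl

theorem IsBirkhoffFactorization.isSplitFactorization {S Sp Sm : Matrix (Fin n) (Fin n) (AA r)}
    (hS : S.map ccA = 1) (h : IsBirkhoffFactorization S Sp Sm) :
    IsSplitFactorization polyHSubgroup.matrix negHSubgroup.matrix (𝔢 S) (𝔢 Sp) (𝔢 Sm) := by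
  obtain ⟨hp, hm, h0, rfl⟩ := h
  have hSm0 : (constantCoeff (𝔢 Sm)).map (·.coeff 0) = 1 := by
    ext i j
    exact (h0 i j 0).trans (by rw [coeff_matrix_one_apply, if_pos rfl])
  have hone : constantCoeff (𝔢 Sp) * constantCoeff (𝔢 Sm) = 1 := by
    rw [← map_mul, ← map_mul, constantCoeff_matrixMvPowerSeriesEquiv, hS]
  have hSp0 : constantCoeff (𝔢 Sp) = 1 := eq_one_of_isPolyH_of_isRegH_of_mul_eq_one
    (fun i j => hp i j 0) (fun i j => hm i j 0) hSm0 hone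
  refine ⟨hSp0, by rwa [hSp0, one_mul] at hone, fun d _ i j => hp i j d,
    fun d hd i j => mem_negHSubgroup_iff.2 ⟨hm i j d, ?_⟩, map_mul _ _ _⟩
  exact (h0 i j d).trans (by rw [coeff_matrix_one_apply, if_neg hd])

theorem IsSplitFactorization.isBirkhoffFactorization {S Sp Sm : Matrix (Fin n) (Fin n) (AA r)}
    (h : IsSplitFactorization polyHSubgroup.matrix negHSubgroup.matrix (𝔢 S) (𝔢 Sp) (𝔢 Sm)) :
    IsBirkhoffFactorization S Sp Sm := by
  have hconst {X : Matrix (Fin n) (Fin n) (AA r)} (hX : constantCoeff (𝔢 X) = 1)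
      (i j : Fin n) : isConstH (X i j 0) := by
    change isConstH (constantCoeff (𝔢 X) i j)
    rw [hX]
    exact isConstH_one_apply i j
  refine ⟨fun i j d => ?_, fun i j d => ?_, fun i j d => ?_,
    (𝔢).injective (by rw [map_mul]; exact h.eq_mul)⟩
  · rcases eq_or_ne d 0 with rfl | hd
    · exact fun k hk => hconst h.constantCoeff_left i j k hk.ne'
    · exact h.coeff_left_mem d hd i j
  · rcases eq_or_ne d 0 with rfl | hd
    · exact fun k hk => hconst h.constantCoeff_right i j k hk.ne
    · exact (mem_negHSubgroup_iff.1 (h.coeff_right_mem d hd i j)).1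
  · rw [coeff_matrix_one_apply]
    rcases eq_or_ne d 0 with rfl | hd
    · change (constantCoeff (𝔢 Sm) i j).coeff 0 = _
      rw [h.constantCoeff_right, if_pos rfl]
      simpa using congrFun (congrFun (map_coeff_one (n := Fin n) 0) i) j
    · rw [if_neg hd]
      exact (mem_negHSubgroup_iff.1 (h.coeff_right_mem d hd i j)).2

end Birkhoff

theorem birkhoff_factorization_general {r n : ℕ}
    (S : Matrix (Fin n) (Fin n) (AA r)) (hScc : S.map ccA = 1) :
    (∃! P : Matrix (Fin n) (Fin n) (AA r) × Matrix (Fin n) (Fin n) (AA r),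
      IsBirkhoffFactorization S P.1 P.2) ∧
    (∀ Sp Sm, IsBirkhoffFactorization S Sp Sm →
      Sp.map ccA = 1 ∧ Sm.map ccA = 1) := by
  let e := matrixMvPowerSeriesEquiv (Fin r) LS (Fin n)
  have hS : constantCoeff (e S) = 1 := (constantCoeff_matrixMvPowerSeriesEquiv S).trans hScc
  refine ⟨?_, fun Sp Sm h => ?_⟩
  · refine ((e.toEquiv.prodCongr e.toEquiv).existsUnique_congr fun P => ?_).2
      (existsUnique_isSplitFactorization
        (AddSubgroup.isCompl_matrix isCompl_polyHSubgroup_negHSubgroup) hS)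
    exact ⟨(·.isSplitFactorization hScc), (·.isBirkhoffFactorization)⟩
  · have h' := h.isSplitFactorization hScc
    exact ⟨h'.constantCoeff_left, h'.constantCoeff_right⟩

/-- **Formal Birkhoff factorization** (from the proof of Theorem 3.8).
Any `S ∈ Mat_n(ℂ[ħ,ħ⁻¹]][[q]])` with `S|_{q=0} = Id` factors uniquely as
`S = S₊·S₋` with `S₊ ∈ Mat_n(ℂ[ħ][[q]])` and `S₋ ∈ Mat_n(ℂ[[ħ⁻¹]][[q]])`,
`S₋ ≡ Id (mod ħ⁻¹)`; moreover the factors automatically satisfy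
`S₊|_{q=0} = Id` and `S₋|_{q=0} = Id`. -/
theorem birkhoff_factorization {r n : ℕ} (hr : 1 ≤ r) (hn : 1 ≤ n)
    (S : Matrix (Fin n) (Fin n) (AA r)) (hScc : S.map ccA = 1) :
    (∃! P : Matrix (Fin n) (Fin n) (AA r) × Matrix (Fin n) (Fin n) (AA r),
      IsBirkhoffFactorization S P.1 P.2) ∧
    (∀ Sp Sm, IsBirkhoffFactorization S Sp Sm →
      Sp.map ccA = 1 ∧ Sm.map ccA = 1) :=
  birkhoff_factorization_general S hScc
end
end

section
/- Let Ω_1, …, Ω_r ∈ Mat_n(ℂ[ħ][[q]]) be flat, i.e. ħ(θ_aΩ_b − θ_bΩ_a) + Ω_aΩ_b − Ω_bΩ_a = 0 for all a, b, and assume Ω_a|_{q=0} is independent of ħ for every a. Then there exists a unique Q ∈ Mat_n(ℂ[ħ][[q]]) with Q|_{q=0} = Id (hence Q is invertible over ℂ[ħ][[q]]) such that for every a the gauge-transformed connection matrix Ω̂_a := Q^{-1}·Ω_a·Q + ħ·Q^{-1}·θ_a Q has entries in ℂ[[q^1,…,q^r]], i.e. is independent of ħ. -/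
/-!
Work over ℂ.  We represent the coefficient ring `ℂ[ħ,ħ⁻¹]]` (formal Laurent
series `Σ_{k ≤ K} c_k ħ^k` with finitely many positive powers of `ħ`) as
`LaurentSeries ℂ` in the variable `t = ħ⁻¹`; thus the coefficient of `t^k`
is the coefficient of `ħ^{-k}`.  `AA r = ℂ[ħ,ħ⁻¹]][[q¹,…,qʳ]]`, and
`θ_a = qᵃ·∂/∂qᵃ` is the logarithmic partial derivative.
-/

noncomputable section

/-!
Write `Q = Σ_d Q_d q^d`, `A_b = Ω_b|_{q=0}` and `P_b` for the transformed connection matrices.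
In degree `d ≠ 0` the gauge equation `Q P_b = Ω_b Q + ħ θ_b Q` reads
`P_{b,d} = ħ d_b Q_d + [A_b, Q_d] + (terms of lower degree)`. Fix `a` with `d_a ≠ 0`. The
operator `X ↦ ħ d_a X + [A_a, X]` determines the `ħ`-expansion of `X` from its lowest term
upwards, so it is injective, hence bijective over `ℂ((ħ⁻¹))`; truncating a preimage gives a
unique `Q_d ∈ Mat_n(ℂ[ħ])` making `P_{a,d}` independent of `ħ`. Gauge transformations preserve
flatness, and in degree `d` the flatness of `P` gives
`ħ d_a P_{b,d} + [A_a, P_{b,d}] ∈ ħ Mat_n(ℂ) + Mat_n(ℂ)`, which forces every `P_{b,d}` to be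
constant as well.
-/

open HahnSeries Finset.HasAntidiagonal

namespace CanonicalFrame

lemma isPolyH_mul {x y : LS} (hx : isPolyH x) (hy : isPolyH y) : isPolyH (x * y) := by
  intro k hk
  rw [coeff_mul]
  refine Finset.sum_eq_zero fun ij hij => ?_
  have hsum := (Finset.mem_antidiagonal.1 hij).2.2
  rcases lt_or_ge 0 ij.1 with h | h
  · rw [hx _ h, zero_mul]
  · rw [hy _ (by omega), mul_zero]

def polyH : Subring LS where
  carrier := {x | isPolyH x}
  zero_mem' _ _ := rfl
  one_mem' k hk := by rw [← single_zero_one, coeff_single_of_ne hk.ne']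
  add_mem' hx hy k hk := by rw [coeff_add, hx k hk, hy k hk, add_zero]
  neg_mem' hx k hk := by rw [coeff_neg, hx k hk, neg_zero]
  mul_mem' := isPolyH_mul

def constH : Subring LS := (C : ℂ →+* LS).range

lemma mem_constH {x : LS} : x ∈ constH ↔ isConstH x := by
  constructor
  · rintro ⟨z, rfl⟩ k hk
    rw [C_apply, coeff_single_of_ne hk]
  · intro hx
    refine ⟨x.coeff 0, ?_⟩
    ext k
    rcases eq_or_ne k 0 with rfl | hk
    · rw [C_apply, coeff_single_same]
    · rw [hx k hk, C_apply, coeff_single_of_ne hk]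

lemma coeff_mul_of_mem_constH {a : LS} (ha : a ∈ constH) (x : LS) (k : ℤ) :
    (a * x).coeff k = a.coeff 0 * x.coeff k := by
  obtain ⟨z, rfl⟩ := ha
  rw [C_mul_eq_smul, coeff_smul, smul_eq_mul, C_apply, coeff_single_same]

lemma hbarL_mem_polyH : hbarL ∈ polyH := fun _ hk => coeff_single_of_ne (by omega)

lemma coeff_hbarL_mul (x : LS) (k : ℤ) : (hbarL * x).coeff k = x.coeff (k + 1) := by
  simpa [hbarL] using coeff_single_mul_add (r := (1 : ℂ)) (x := x) (a := k + 1) (b := -1)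

section coeffMat

variable {ι : Type*}

def coeffMat (k : ℤ) : Matrix ι ι LS →+ Matrix ι ι ℂ := (coeff.addMonoidHom k).mapMatrix

@[simp] lemma coeffMat_apply (k : ℤ) (X : Matrix ι ι LS) (i j : ι) :
    coeffMat k X i j = (X i j).coeff k := rfl

lemma eq_zero_iff_forall_coeffMat_eq_zero (X : Matrix ι ι LS) :
    X = 0 ↔ ∀ k, coeffMat k X = 0 := by
  refine ⟨fun h k => by rw [h, map_zero], fun h => ?_⟩
  ext i j k
  exact congrFun₂ (h k) i j

lemma coeffMat_hbarL_smul (k : ℤ) (X : Matrix ι ι LS) :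
    coeffMat k (hbarL • X) = coeffMat (k + 1) X := by
  ext i j
  exact coeff_hbarL_mul _ _

lemma exists_coeffMat_eq_zero_of_lt [Finite ι] (X : Matrix ι ι LS) :
    ∃ N : ℤ, ∀ k < N, coeffMat k X = 0 := by
  obtain ⟨N, hN⟩ := (Set.finite_range fun p : ι × ι => (X p.1 p.2).order).bddBelow
  refine ⟨N, fun k hk => ?_⟩
  ext i j
  exact coeff_eq_zero_of_lt_order (hk.trans_le (hN ⟨(i, j), rfl⟩))

variable [Fintype ι] [DecidableEq ι]

lemma mem_polyH_matrix_iff (X : Matrix ι ι LS) :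
    X ∈ polyH.matrix ↔ ∀ k, 0 < k → coeffMat k X = 0 :=
  ⟨fun h k hk => by ext i j; exact h i j k hk, fun h i j k hk => congrFun₂ (h k hk) i j⟩

lemma mem_constH_matrix_iff (X : Matrix ι ι LS) :
    X ∈ constH.matrix ↔ ∀ k, k ≠ 0 → coeffMat k X = 0 := by
  refine ⟨fun h k hk => ?_, fun h i j => mem_constH.2 fun k hk => congrFun₂ (h k hk) i j⟩
  ext i j
  exact mem_constH.1 (h i j) k hk

lemma hbarL_smul_mem_polyH_matrix {X : Matrix ι ι LS} (hX : X ∈ polyH.matrix) :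
    hbarL • X ∈ polyH.matrix :=
  fun i j => polyH.mul_mem hbarL_mem_polyH (hX i j)

lemma coeffMat_mul_of_mem_constH_left {A : Matrix ι ι LS} (hA : A ∈ constH.matrix) (k : ℤ)
    (X : Matrix ι ι LS) : coeffMat k (A * X) = coeffMat 0 A * coeffMat k X := by
  ext i j
  simp only [coeffMat_apply, Matrix.mul_apply, coeff_sum, coeff_mul_of_mem_constH (hA _ _)]

lemma coeffMat_mul_of_mem_constH_right {A : Matrix ι ι LS} (hA : A ∈ constH.matrix) (k : ℤ)
    (X : Matrix ι ι LS) : coeffMat k (X * A) = coeffMat k X * coeffMat 0 A := by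
  ext i j
  simp only [coeffMat_apply, Matrix.mul_apply, coeff_sum, mul_comm (X i _),
    coeff_mul_of_mem_constH (hA _ _)]
  exact Finset.sum_congr rfl fun _ _ => mul_comm _ _

end coeffMat

lemma constH_le_polyH : constH ≤ polyH := by
  rintro _ ⟨z, rfl⟩ k hk
  rw [C_apply, coeff_single_of_ne hk.ne']

section gaugeOp

variable {ι : Type*} [Fintype ι]

def gaugeOp (m : ℕ) (A : Matrix ι ι LS) : Matrix ι ι LS →ₗ[LS] Matrix ι ι LS :=
  (m • hbarL) • LinearMap.id + (LinearMap.mulLeft LS A - LinearMap.mulRight LS A)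

lemma gaugeOp_apply (m : ℕ) (A X : Matrix ι ι LS) :
    gaugeOp m A X = hbarL • (m • X) + (A * X - X * A) := by
  simp only [gaugeOp, LinearMap.add_apply, LinearMap.smul_apply, LinearMap.id_apply,
    LinearMap.sub_apply, LinearMap.mulLeft_apply, LinearMap.mulRight_apply]
  congr 1
  exact (smul_assoc m hbarL X).trans (smul_comm m hbarL X)

variable [DecidableEq ι]

lemma gaugeOp_mem_polyH_matrix (m : ℕ) {A X : Matrix ι ι LS} (hA : A ∈ polyH.matrix)
    (hX : X ∈ polyH.matrix) : gaugeOp m A X ∈ polyH.matrix := by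
  rw [gaugeOp_apply]
  exact add_mem (hbarL_smul_mem_polyH_matrix (nsmul_mem hX m))
    (sub_mem (mul_mem hA hX) (mul_mem hX hA))

lemma coeffMat_gaugeOp (m : ℕ) {A : Matrix ι ι LS} (hA : A ∈ constH.matrix)
    (X : Matrix ι ι LS) (k : ℤ) : coeffMat k (gaugeOp m A X) =
      m • coeffMat (k + 1) X + (coeffMat 0 A * coeffMat k X - coeffMat k X * coeffMat 0 A) := by
  rw [gaugeOp_apply, map_add, coeffMat_hbarL_smul, map_nsmul, map_sub,
    coeffMat_mul_of_mem_constH_left hA, coeffMat_mul_of_mem_constH_right hA]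

lemma coeffMat_eq_zero_of_coeffMat_gaugeOp_eq_zero {m : ℕ} (hm : m ≠ 0) {A : Matrix ι ι LS}
    (hA : A ∈ constH.matrix) {X : Matrix ι ι LS} {c : ℤ}
    (h : ∀ k < c, coeffMat k (gaugeOp m A X) = 0) : ∀ k ≤ c, coeffMat k X = 0 := by
  obtain ⟨N, hN⟩ := exists_coeffMat_eq_zero_of_lt X
  have key : ∀ k, N - 1 ≤ k → k ≤ c → coeffMat k X = 0 := by
    intro k hk
    induction k, hk using Int.leInduction with
    | base => exact fun _ => hN _ (by omega)
    | succ k _ ih =>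
      intro hkc
      have hk := h k (by omega)
      rw [coeffMat_gaugeOp m hA, ih (by omega), mul_zero, zero_mul, sub_zero, add_zero,
        ← Nat.cast_smul_eq_nsmul ℂ] at hk
      exact (smul_eq_zero.mp hk).resolve_left (Nat.cast_ne_zero.mpr hm)
  intro k hk
  rcases lt_or_ge k N with hkN | hkN
  · exact hN k hkN
  · exact key k (by omega) hk

lemma gaugeOp_injective {m : ℕ} (hm : m ≠ 0) {A : Matrix ι ι LS} (hA : A ∈ constH.matrix) :
    Function.Injective (gaugeOp m A) := by
  refine (injective_iff_map_eq_zero _).2 fun X hX =>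
    (eq_zero_iff_forall_coeffMat_eq_zero X).2 fun k => ?_
  exact coeffMat_eq_zero_of_coeffMat_gaugeOp_eq_zero hm hA (fun j _ => by rw [hX, map_zero]) k
    le_rfl

lemma eq_zero_of_gaugeOp_mem_constH {m : ℕ} (hm : m ≠ 0) {A X : Matrix ι ι LS}
    (hA : A ∈ constH.matrix) (hX : X ∈ polyH.matrix) (h : gaugeOp m A X ∈ constH.matrix) :
    X = 0 := by
  refine (eq_zero_iff_forall_coeffMat_eq_zero X).2 fun k => ?_
  rcases le_or_gt k 0 with hk | hk
  · exact coeffMat_eq_zero_of_coeffMat_gaugeOp_eq_zero hm hA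
      (fun j hj => (mem_constH_matrix_iff _).1 h j hj.ne) k hk
  · exact (mem_polyH_matrix_iff X).1 hX k hk

lemma mem_constH_of_gaugeOp_sub_gaugeOp_mem_constH {m m' : ℕ} (hm : m ≠ 0)
    {A B X Y : Matrix ι ι LS} (hA : A ∈ constH.matrix) (hB : B ∈ constH.matrix)
    (hX : X ∈ polyH.matrix) (hY : Y ∈ constH.matrix)
    (h : gaugeOp m A X - gaugeOp m' B Y ∈ constH.matrix) : X ∈ constH.matrix := by
  have hYk := (mem_constH_matrix_iff Y).1 hY
  have hlow : ∀ k < -1, coeffMat k (gaugeOp m A X) = 0 := by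
    intro k hk
    rw [← sub_add_cancel (gaugeOp m A X) (gaugeOp m' B Y), map_add,
      (mem_constH_matrix_iff _).1 h k (by omega), coeffMat_gaugeOp m' hB, hYk k (by omega),
      hYk (k + 1) (by omega)]
    simp
  refine (mem_constH_matrix_iff X).2 fun k hk => ?_
  rcases le_or_gt k (-1) with hk' | hk'
  · exact coeffMat_eq_zero_of_coeffMat_gaugeOp_eq_zero hm hA hlow k hk'
  · exact (mem_polyH_matrix_iff X).1 hX k (by omega)

lemma exists_gaugeOp_add_mem_constH {m : ℕ} (hm : m ≠ 0) {A S : Matrix ι ι LS}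
    (hA : A ∈ constH.matrix) (hS : S ∈ polyH.matrix) :
    ∃ X ∈ polyH.matrix, gaugeOp m A X + S ∈ constH.matrix := by
  obtain ⟨Y, hY⟩ := LinearMap.injective_iff_surjective.mp (gaugeOp_injective hm hA) (-S)
  -- the coefficients of positive powers of `ħ` in `gaugeOp m A Y` only involve the part of `Y`
  -- polynomial in `ħ`, so truncating `Y` to that part keeps them equal to those of `-S`
  set X := Y.map (truncLT 1)
  have hXk : ∀ k, coeffMat k X = if k < 1 then coeffMat k Y else 0 := by
    intro k; ext i j; split_ifs <;> simp [X, *]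
  have hXpoly : X ∈ polyH.matrix :=
    (mem_polyH_matrix_iff X).2 fun k hk => by rw [hXk, if_neg (by omega)]
  refine ⟨X, hXpoly, (mem_constH_matrix_iff _).2 fun k hk => ?_⟩
  rcases lt_or_gt_of_ne hk with hk | hk
  · have hAk := coeffMat_gaugeOp m hA
    rw [map_add, hAk, hXk, hXk, if_pos (by omega), if_pos (by omega), ← hAk, ← map_add, hY,
      neg_add_cancel, map_zero]
  · exact (mem_polyH_matrix_iff _).1 (add_mem (gaugeOp_mem_polyH_matrix m
      (fun i j => constH_le_polyH (hA i j)) hXpoly) hS) k hk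

end gaugeOp

section solveGauge

variable {ι : Type*} [Fintype ι] [DecidableEq ι]

def solveGauge (m : ℕ) (A S : Matrix ι ι LS) : Matrix ι ι LS :=
  Classical.epsilon fun X => X ∈ polyH.matrix ∧ gaugeOp m A X + S ∈ constH.matrix

lemma solveGauge_spec {m : ℕ} (hm : m ≠ 0) {A S : Matrix ι ι LS} (hA : A ∈ constH.matrix)
    (hS : S ∈ polyH.matrix) :
    solveGauge m A S ∈ polyH.matrix ∧ gaugeOp m A (solveGauge m A S) + S ∈ constH.matrix :=
  Classical.epsilon_spec (exists_gaugeOp_add_mem_constH hm hA hS)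

end solveGauge

section qcoeff

variable {r n : ℕ}

def qcoeff (d : Fin r →₀ ℕ) : Matrix (Fin n) (Fin n) (AA r) →+ Matrix (Fin n) (Fin n) LS :=
  (MvPowerSeries.coeff d).toAddMonoidHom.mapMatrix

@[simp] lemma qcoeff_apply (d : Fin r →₀ ℕ) (M : Matrix (Fin n) (Fin n) (AA r))
    (i j : Fin n) :
    qcoeff d M i j = MvPowerSeries.coeff d (M i j) := rfl

def ofQcoeff (f : (Fin r →₀ ℕ) → Matrix (Fin n) (Fin n) LS) :
    Matrix (Fin n) (Fin n) (AA r) :=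
  Matrix.of fun i j d => f d i j

@[simp] lemma qcoeff_ofQcoeff (f : (Fin r →₀ ℕ) → Matrix (Fin n) (Fin n) LS)
    (d : Fin r →₀ ℕ) :
    qcoeff d (ofQcoeff f) = f d := rfl

lemma matrix_ext_qcoeff {M N : Matrix (Fin n) (Fin n) (AA r)}
    (h : ∀ d, qcoeff d M = qcoeff d N) : M = N :=
  Matrix.ext fun i j => MvPowerSeries.ext fun d => congrFun₂ (h d) i j

lemma qcoeff_zero_eq_map_ccA (M : Matrix (Fin n) (Fin n) (AA r)) : qcoeff 0 M = M.map ccA := rfl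

lemma qcoeff_mul (d : Fin r →₀ ℕ) (M N : Matrix (Fin n) (Fin n) (AA r)) :
    qcoeff d (M * N) = ∑ p ∈ antidiagonal d, qcoeff p.1 M * qcoeff p.2 N := by
  refine Matrix.ext fun i j => ?_
  simp only [qcoeff_apply, Matrix.mul_apply, map_sum, MvPowerSeries.coeff_mul, Matrix.sum_apply]
  exact Finset.sum_comm

lemma qcoeff_hbarA_smul (d : Fin r →₀ ℕ) (M : Matrix (Fin n) (Fin n) (AA r)) :
    qcoeff d (hbarA r • M) = hbarL • qcoeff d M := by
  ext i j
  simp [hbarA, MvPowerSeries.coeff_C_mul]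

lemma coeff_thetaA (a : Fin r) (x : AA r) (d : Fin r →₀ ℕ) :
    MvPowerSeries.coeff d (thetaA a x) = d a * MvPowerSeries.coeff d x := rfl

lemma qcoeff_thetaMat (a : Fin r) (M : Matrix (Fin n) (Fin n) (AA r)) (d : Fin r →₀ ℕ) :
    qcoeff d (thetaMat a M) = d a • qcoeff d M := by
  ext i j
  simp [thetaMat, coeff_thetaA, nsmul_eq_mul]

lemma matPolyH_iff (M : Matrix (Fin n) (Fin n) (AA r)) :
    MatPolyH M ↔ ∀ d, qcoeff d M ∈ polyH.matrix :=
  ⟨fun h d i j => h i j d, fun h i j d => h d i j⟩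

lemma matConstH_iff (M : Matrix (Fin n) (Fin n) (AA r)) :
    MatConstH M ↔ ∀ d, qcoeff d M ∈ constH.matrix :=
  ⟨fun h d i j => mem_constH.2 (h i j d), fun h i j d => mem_constH.1 (h d i j)⟩

lemma isUnit_of_map_ccA_eq_one {Q : Matrix (Fin n) (Fin n) (AA r)} (h : Q.map ccA = 1) :
    IsUnit Q := by
  rw [Matrix.isUnit_iff_isUnit_det, MvPowerSeries.isUnit_iff_constantCoeff]
  change IsUnit (ccA Q.det)
  rw [RingHom.map_det, RingHom.mapMatrix_apply, h, Matrix.det_one]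
  exact isUnit_one

end qcoeff

lemma mul_curvature_eq_curvature_mul {R : Type*} [Ring R] (Da Db : R →+ R)
    (hDa : ∀ x y, Da (x * y) = Da x * y + x * Da y)
    (hDb : ∀ x y, Db (x * y) = Db x * y + x * Db y)
    {Q Pa Pb Ωa Ωb : R} (hcomm : Da (Db Q) = Db (Da Q))
    (ha : Q * Pa = Ωa * Q + Da Q) (hb : Q * Pb = Ωb * Q + Db Q) :
    Q * (Da Pb - Db Pa + (Pa * Pb - Pb * Pa)) =
      (Da Ωb - Db Ωa + (Ωa * Ωb - Ωb * Ωa)) * Q := by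
  have e1 := congrArg Da hb
  have e2 := congrArg Db ha
  rw [hDa, map_add, hDa] at e1
  rw [hDb, map_add, hDb] at e2
  have hQa : Da Q = Q * Pa - Ωa * Q := by rw [ha]; abel
  have hQb : Db Q = Q * Pb - Ωb * Q := by rw [hb]; abel
  calc Q * (Da Pb - Db Pa + (Pa * Pb - Pb * Pa))
      = (Da Q * Pb + Q * Da Pb) - (Db Q * Pa + Q * Db Pa) - Da Q * Pb + Db Q * Pa
          + Q * (Pa * Pb - Pb * Pa) := by noncomm_ring
    _ = (Da Ωb * Q + Ωb * Da Q + Da (Db Q)) - (Db Ωa * Q + Ωa * Db Q + Db (Da Q)) - Da Q * Pb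
          + Db Q * Pa + Q * (Pa * Pb - Pb * Pa) := by rw [e1, e2]
    _ = (Da Ωb - Db Ωa + (Ωa * Ωb - Ωb * Ωa)) * Q := by rw [hcomm, hQa, hQb]; noncomm_ring

section hbarTheta

variable {r n : ℕ}

lemma thetaMat_mul (a : Fin r) (X Y : Matrix (Fin n) (Fin n) (AA r)) :
    thetaMat a (X * Y) = thetaMat a X * Y + X * thetaMat a Y := by
  refine matrix_ext_qcoeff fun d => ?_
  rw [qcoeff_thetaMat, qcoeff_mul, map_add, qcoeff_mul, qcoeff_mul, Finset.smul_sum,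
    ← Finset.sum_add_distrib]
  refine Finset.sum_congr rfl fun p hp => ?_
  simp only [qcoeff_thetaMat, ← mem_antidiagonal.1 hp, Finsupp.add_apply, nsmul_eq_mul,
    Nat.cast_add]
  rw [add_mul, mul_assoc, ← mul_assoc (qcoeff p.1 X), ← (Nat.cast_commute _ _).eq, mul_assoc]

lemma thetaMat_add (a : Fin r) (X Y : Matrix (Fin n) (Fin n) (AA r)) :
    thetaMat a (X + Y) = thetaMat a X + thetaMat a Y := by
  refine matrix_ext_qcoeff fun d => ?_
  rw [qcoeff_thetaMat, map_add, map_add, nsmul_add, qcoeff_thetaMat, qcoeff_thetaMat]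

-- `rw` with the generic `smul` lemmas fails for scalars in `LS` and `AA r` (their `SMul`
-- instances do not unify reducibly with the ones these lemmas expect), hence the entrywise proofs.
def hbarTheta (a : Fin r) : Matrix (Fin n) (Fin n) (AA r) →+ Matrix (Fin n) (Fin n) (AA r) :=
  AddMonoidHom.mk' (fun M => hbarA r • thetaMat a M) fun X Y => by
    refine Matrix.ext fun i j => ?_
    simp only [thetaMat_add, Matrix.smul_apply, Matrix.add_apply, smul_eq_mul, mul_add]

lemma hbarTheta_apply (a : Fin r) (M : Matrix (Fin n) (Fin n) (AA r)) :
    hbarTheta a M = hbarA r • thetaMat a M := rfl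

lemma hbarA_smul_thetaMat_sub (a b : Fin r) (X Y : Matrix (Fin n) (Fin n) (AA r)) :
    hbarA r • (thetaMat a X - thetaMat b Y) = hbarTheta a X - hbarTheta b Y :=
  Matrix.ext fun _ _ => mul_sub _ _ _

lemma hbarTheta_mul (a : Fin r) (X Y : Matrix (Fin n) (Fin n) (AA r)) :
    hbarTheta a (X * Y) = hbarTheta a X * Y + X * hbarTheta a Y := by
  refine Matrix.ext fun i j => ?_
  simp only [hbarTheta_apply, thetaMat_mul, Matrix.smul_apply, Matrix.add_apply, Matrix.mul_apply,
    smul_eq_mul, mul_add, Finset.mul_sum, mul_assoc, mul_left_comm (hbarA r)]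

lemma hbarTheta_comm (a b : Fin r) (M : Matrix (Fin n) (Fin n) (AA r)) :
    hbarTheta a (hbarTheta b M) = hbarTheta b (hbarTheta a M) := by
  refine Matrix.ext fun i j => MvPowerSeries.ext fun d => ?_
  simp only [hbarTheta_apply, Matrix.smul_apply, smul_eq_mul, thetaMat, Matrix.of_apply, hbarA,
    MvPowerSeries.coeff_C_mul, coeff_thetaA]
  ring

lemma qcoeff_hbarTheta (a : Fin r) (M : Matrix (Fin n) (Fin n) (AA r)) (d : Fin r →₀ ℕ) :
    qcoeff d (hbarTheta a M) = hbarL • (d a • qcoeff d M) := by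
  rw [hbarTheta_apply, qcoeff_hbarA_smul, qcoeff_thetaMat]

lemma isFlat_iff (Ω : Fin r → Matrix (Fin n) (Fin n) (AA r)) :
    IsFlat Ω ↔
      ∀ a b, hbarTheta a (Ω b) - hbarTheta b (Ω a) + (Ω a * Ω b - Ω b * Ω a) = 0 := by
  simp only [IsFlat, hbarA_smul_thetaMat_sub]

lemma isFlat_of_gauge {Ω P : Fin r → Matrix (Fin n) (Fin n) (AA r)}
    {Q : Matrix (Fin n) (Fin n) (AA r)} (hΩ : IsFlat Ω) (hQ : IsUnit Q)
    (h : ∀ a, Q * P a = Ω a * Q + hbarTheta a Q) : IsFlat P := by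
  rw [isFlat_iff] at hΩ ⊢
  intro a b
  have key := mul_curvature_eq_curvature_mul (hbarTheta a) (hbarTheta b) (hbarTheta_mul a)
    (hbarTheta_mul b) (hbarTheta_comm a b Q) (h a) (h b)
  rwa [hΩ a b, zero_mul, hQ.mul_right_eq_zero] at key

end hbarTheta

section frame

variable {r n : ℕ}

def properAntidiagonal (d : Fin r →₀ ℕ) : Finset ((Fin r →₀ ℕ) × (Fin r →₀ ℕ)) :=
  (antidiagonal d).filter fun p => p.1 ≠ 0 ∧ p.2 ≠ 0

lemma lt_of_mem_properAntidiagonal {d : Fin r →₀ ℕ}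
    {p : (Fin r →₀ ℕ) × (Fin r →₀ ℕ)} (hp : p ∈ properAntidiagonal d) :
    p.1 < d ∧ p.2 < d := by
  simp only [properAntidiagonal, Finset.mem_filter, mem_antidiagonal] at hp
  obtain ⟨rfl, h1, h2⟩ := hp
  exact ⟨lt_add_of_pos_right _ (pos_iff_ne_zero.2 h2),
    lt_add_of_pos_left _ (pos_iff_ne_zero.2 h1)⟩

lemma sum_antidiagonal_eq_add_sum_properAntidiagonal {M : Type*} [AddCommMonoid M]
    {d : Fin r →₀ ℕ} (hd : d ≠ 0) (F : (Fin r →₀ ℕ) × (Fin r →₀ ℕ) → M) :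
    ∑ p ∈ antidiagonal d, F p = F (0, d) + F (d, 0) + ∑ p ∈ properAntidiagonal d, F p := by
  have h0 : (0, d) ∈ antidiagonal d := mem_antidiagonal.2 (zero_add d)
  have h1 : (d, 0) ∈ (antidiagonal d).erase (0, d) :=
    Finset.mem_erase.2 ⟨fun h => hd (Prod.ext_iff.1 h).1, mem_antidiagonal.2 (add_zero d)⟩
  rw [← Finset.add_sum_erase _ _ h0, ← Finset.add_sum_erase _ _ h1, add_assoc]
  congr 3
  ext ⟨p, q⟩
  simp only [properAntidiagonal, Finset.mem_erase, Finset.mem_filter, mem_antidiagonal, ne_eq,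
    Prod.mk.injEq]
  constructor
  · rintro ⟨hne₁, hne₀, h⟩
    exact ⟨h, fun hp => hne₀ ⟨hp, by rw [← h, hp, zero_add]⟩,
      fun hq => hne₁ ⟨by rw [← h, hq, add_zero], hq⟩⟩
  · rintro ⟨h, hp, hq⟩
    exact ⟨fun H => hq H.2, fun H => hp H.1, h⟩

def pivot (d : Fin r →₀ ℕ) (hd : d ≠ 0) : Fin r := (DFunLike.ne_iff.mp hd).choose

lemma pivot_ne_zero {d : Fin r →₀ ℕ} (hd : d ≠ 0) : d (pivot d hd) ≠ 0 :=
  (DFunLike.ne_iff.mp hd).choose_spec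

def lowerDegreeTerm (W : Matrix (Fin n) (Fin n) (AA r))
    (Qs Ps : (Fin r →₀ ℕ) → Matrix (Fin n) (Fin n) LS) (d : Fin r →₀ ℕ) :
    Matrix (Fin n) (Fin n) LS :=
  qcoeff d W + ∑ p ∈ properAntidiagonal d, (qcoeff p.1 W * Qs p.2 - Qs p.1 * Ps p.2)

lemma lowerDegreeTerm_congr {W : Matrix (Fin n) (Fin n) (AA r)}
    {Qs Ps Qs' Ps' : (Fin r →₀ ℕ) → Matrix (Fin n) (Fin n) LS} {d : Fin r →₀ ℕ}
    (hQ : ∀ e < d, Qs e = Qs' e) (hP : ∀ e < d, Ps e = Ps' e) :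
    lowerDegreeTerm W Qs Ps d = lowerDegreeTerm W Qs' Ps' d := by
  refine congrArg _ (Finset.sum_congr rfl fun p hp => ?_)
  obtain ⟨h1, h2⟩ := lt_of_mem_properAntidiagonal hp
  rw [hQ _ h1, hQ _ h2, hP _ h2]

lemma lowerDegreeTerm_mem_matrix {S : Subring LS} {W : Matrix (Fin n) (Fin n) (AA r)}
    {Qs Ps : (Fin r →₀ ℕ) → Matrix (Fin n) (Fin n) LS} {d : Fin r →₀ ℕ}
    (hW : ∀ e, qcoeff e W ∈ S.matrix) (hQ : ∀ e < d, Qs e ∈ S.matrix)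
    (hP : ∀ e < d, Ps e ∈ S.matrix) : lowerDegreeTerm W Qs Ps d ∈ S.matrix := by
  refine add_mem (hW d) (sum_mem fun p hp => ?_)
  obtain ⟨h1, h2⟩ := lt_of_mem_properAntidiagonal hp
  exact sub_mem (mul_mem (hW _) (hQ _ h2)) (mul_mem (hQ _ h1) (hP _ h2))

variable (Ω : Fin r → Matrix (Fin n) (Fin n) (AA r))

def frame (d : Fin r →₀ ℕ) :
    Matrix (Fin n) (Fin n) LS × (Fin r → Matrix (Fin n) (Fin n) LS) :=
  if hd : d = 0 then (1, fun b => qcoeff 0 (Ω b)) else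
    let below := fun e => if e < d then frame e else 0
    let S := fun b => lowerDegreeTerm (Ω b) (fun e => (below e).1) (fun e => (below e).2 b) d
    let a := pivot d hd
    let X := solveGauge (d a) (qcoeff 0 (Ω a)) (S a)
    (X, fun b => gaugeOp (d b) (qcoeff 0 (Ω b)) X + S b)
termination_by d
decreasing_by assumption

def frameQ (d : Fin r →₀ ℕ) : Matrix (Fin n) (Fin n) LS := (frame Ω d).1

def frameP (b : Fin r) (d : Fin r →₀ ℕ) : Matrix (Fin n) (Fin n) LS := (frame Ω d).2 b

lemma frameQ_zero : frameQ Ω 0 = 1 := by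
  rw [frameQ, frame, dif_pos rfl]

lemma frameP_zero (b : Fin r) : frameP Ω b 0 = qcoeff 0 (Ω b) := by
  rw [frameP, frame, dif_pos rfl]

lemma lowerDegreeTerm_frame_below (d : Fin r →₀ ℕ) (b : Fin r) :
    lowerDegreeTerm (Ω b) (fun e => (if e < d then frame Ω e else 0).1)
      (fun e => (if e < d then frame Ω e else 0).2 b) d =
      lowerDegreeTerm (Ω b) (frameQ Ω) (frameP Ω b) d :=
  lowerDegreeTerm_congr (fun e he => by simp only [if_pos he, frameQ])
    (fun e he => by simp only [if_pos he, frameP])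

lemma frameQ_of_ne_zero {d : Fin r →₀ ℕ} (hd : d ≠ 0) :
    frameQ Ω d = solveGauge (d (pivot d hd)) (qcoeff 0 (Ω (pivot d hd)))
      (lowerDegreeTerm (Ω (pivot d hd)) (frameQ Ω) (frameP Ω (pivot d hd)) d) := by
  rw [frameQ, frame, dif_neg hd]
  simp only [lowerDegreeTerm_frame_below]

lemma frameP_of_ne_zero {d : Fin r →₀ ℕ} (hd : d ≠ 0) (b : Fin r) :
    frameP Ω b d = gaugeOp (d b) (qcoeff 0 (Ω b)) (frameQ Ω d) +
      lowerDegreeTerm (Ω b) (frameQ Ω) (frameP Ω b) d := by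
  rw [frameQ_of_ne_zero Ω hd, frameP, frame, dif_neg hd]
  simp only [lowerDegreeTerm_frame_below]

def frameMatrix : Matrix (Fin n) (Fin n) (AA r) :=
  ofQcoeff (frameQ Ω)

def frameConnection (b : Fin r) : Matrix (Fin n) (Fin n) (AA r) :=
  ofQcoeff (frameP Ω b)

end frame

section gauge

variable {r n : ℕ}

lemma gauge_iff_forall_coeff (a : Fin r) (Q P W : Matrix (Fin n) (Fin n) (AA r)) :
    Q * P = W * Q + hbarTheta a Q ↔ ∀ d, ∑ p ∈ antidiagonal d, qcoeff p.1 Q * qcoeff p.2 P =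
      ∑ p ∈ antidiagonal d, qcoeff p.1 W * qcoeff p.2 Q + hbarL • (d a • qcoeff d Q) := by
  refine ⟨fun h d => ?_, fun h => matrix_ext_qcoeff fun d => ?_⟩
  · rw [← qcoeff_mul, h, map_add, qcoeff_mul, qcoeff_hbarTheta]
  · rw [qcoeff_mul, h, map_add, qcoeff_mul, qcoeff_hbarTheta]

lemma gauge_coeff_iff {W : Matrix (Fin n) (Fin n) (AA r)}
    {Qs Ps : (Fin r →₀ ℕ) → Matrix (Fin n) (Fin n) LS} (hQ : Qs 0 = 1)
    (hP : Ps 0 = qcoeff 0 W) {d : Fin r →₀ ℕ} (hd : d ≠ 0) (m : ℕ) :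
    ∑ p ∈ antidiagonal d, Qs p.1 * Ps p.2 =
        ∑ p ∈ antidiagonal d, qcoeff p.1 W * Qs p.2 + hbarL • (m • Qs d) ↔
      Ps d = gaugeOp m (qcoeff 0 W) (Qs d) + lowerDegreeTerm W Qs Ps d := by
  have key : ∑ p ∈ antidiagonal d, Qs p.1 * Ps p.2 -
      (∑ p ∈ antidiagonal d, qcoeff p.1 W * Qs p.2 + hbarL • (m • Qs d)) =
      Ps d - (gaugeOp m (qcoeff 0 W) (Qs d) + lowerDegreeTerm W Qs Ps d) := by
    rw [sum_antidiagonal_eq_add_sum_properAntidiagonal hd,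
      sum_antidiagonal_eq_add_sum_properAntidiagonal hd, gaugeOp_apply, lowerDegreeTerm, hQ, hP,
      one_mul, mul_one, Finset.sum_sub_distrib]
    abel
  rw [← sub_eq_zero, key, sub_eq_zero]

lemma gauge_coeff_zero_iff {W : Matrix (Fin n) (Fin n) (AA r)}
    {Qs Ps : (Fin r →₀ ℕ) → Matrix (Fin n) (Fin n) LS} (hQ : Qs 0 = 1) (a : Fin r) :
    ∑ p ∈ antidiagonal 0, Qs p.1 * Ps p.2 =
        ∑ p ∈ antidiagonal 0, qcoeff p.1 W * Qs p.2 +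
          hbarL • ((0 : Fin r →₀ ℕ) a • Qs 0) ↔
      Ps 0 = qcoeff 0 W := by
  rw [Finsupp.antidiagonal_zero, Finset.sum_singleton, Finset.sum_singleton, hQ, one_mul, mul_one,
    Finsupp.coe_zero, Pi.zero_apply, zero_nsmul,
    show hbarL • (0 : Matrix (Fin n) (Fin n) LS) = 0 from Matrix.ext fun _ _ => mul_zero _,
    add_zero]

lemma gauge_iff_ringInverse {Q : Matrix (Fin n) (Fin n) (AA r)} (hQ : IsUnit Q) (a : Fin r)
    (W P : Matrix (Fin n) (Fin n) (AA r)) :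
    Ring.inverse Q * W * Q + hbarA r • (Ring.inverse Q * thetaMat a Q) = P ↔
      Q * P = W * Q + hbarTheta a Q := by
  have hsmul : hbarA r • (Ring.inverse Q * thetaMat a Q) = Ring.inverse Q * hbarTheta a Q :=
    Matrix.ext fun i j => by
      simp only [hbarTheta_apply, Matrix.smul_apply, Matrix.mul_apply, smul_eq_mul, Finset.mul_sum,
        mul_left_comm (hbarA r)]
  rw [hsmul, mul_assoc, ← mul_add]
  constructor
  · rintro rfl
    rw [← mul_assoc, Ring.mul_inverse_cancel _ hQ, one_mul]
  · rintro h
    rw [← h, ← mul_assoc, Ring.inverse_mul_cancel _ hQ, one_mul]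

lemma gaugeOp_sub_gaugeOp_of_isFlat {P : Fin r → Matrix (Fin n) (Fin n) (AA r)} (hP : IsFlat P)
    (a b : Fin r) {d : Fin r →₀ ℕ} (hd : d ≠ 0) :
    gaugeOp (d a) (qcoeff 0 (P a)) (qcoeff d (P b)) -
        gaugeOp (d b) (qcoeff 0 (P b)) (qcoeff d (P a)) +
      ∑ p ∈ properAntidiagonal d,
          (qcoeff p.1 (P a) * qcoeff p.2 (P b) - qcoeff p.1 (P b) * qcoeff p.2 (P a)) = 0 := by
  have h := congrArg (qcoeff d) ((isFlat_iff P).1 hP a b)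
  rw [map_add, map_sub, map_sub, qcoeff_hbarTheta, qcoeff_hbarTheta, qcoeff_mul, qcoeff_mul,
    sum_antidiagonal_eq_add_sum_properAntidiagonal hd,
    sum_antidiagonal_eq_add_sum_properAntidiagonal hd, map_zero] at h
  rw [gaugeOp_apply, gaugeOp_apply, ← h, Finset.sum_sub_distrib]
  abel

end gauge

section canonicalFrame

variable {r n : ℕ} {Ω : Fin r → Matrix (Fin n) (Fin n) (AA r)}

lemma frame_mem_polyH (hpoly : ∀ a, MatPolyH (Ω a))
    (hcc : ∀ a, qcoeff 0 (Ω a) ∈ constH.matrix) (d : Fin r →₀ ℕ) :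
    frameQ Ω d ∈ polyH.matrix ∧ ∀ b, frameP Ω b d ∈ polyH.matrix := by
  induction d using WellFoundedLT.induction with
  | _ d ih =>
  rcases eq_or_ne d 0 with rfl | hd
  · exact ⟨frameQ_zero Ω ▸ one_mem _,
      fun b => frameP_zero Ω b ▸ (matPolyH_iff _).1 (hpoly b) 0⟩
  have hS : ∀ b, lowerDegreeTerm (Ω b) (frameQ Ω) (frameP Ω b) d ∈ polyH.matrix := fun b =>
    lowerDegreeTerm_mem_matrix ((matPolyH_iff _).1 (hpoly b)) (fun e he => (ih e he).1)
      (fun e he => (ih e he).2 b)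
  have hQ : frameQ Ω d ∈ polyH.matrix := by
    rw [frameQ_of_ne_zero Ω hd]
    exact (solveGauge_spec (pivot_ne_zero hd) (hcc _) (hS _)).1
  refine ⟨hQ, fun b => ?_⟩
  rw [frameP_of_ne_zero Ω hd]
  exact add_mem (gaugeOp_mem_polyH_matrix _ (fun i j => constH_le_polyH (hcc b i j)) hQ) (hS b)

lemma frameP_pivot_mem_constH (hpoly : ∀ a, MatPolyH (Ω a))
    (hcc : ∀ a, qcoeff 0 (Ω a) ∈ constH.matrix) {d : Fin r →₀ ℕ} (hd : d ≠ 0) :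
    frameP Ω (pivot d hd) d ∈ constH.matrix := by
  have hS :
      lowerDegreeTerm (Ω (pivot d hd)) (frameQ Ω) (frameP Ω (pivot d hd)) d ∈ polyH.matrix :=
    lowerDegreeTerm_mem_matrix ((matPolyH_iff _).1 (hpoly _))
      (fun e _ => (frame_mem_polyH hpoly hcc e).1) (fun e _ => (frame_mem_polyH hpoly hcc e).2 _)
  rw [frameP_of_ne_zero Ω hd, frameQ_of_ne_zero Ω hd]
  exact (solveGauge_spec (pivot_ne_zero hd) (hcc _) hS).2

lemma frameMatrix_map_ccA : (frameMatrix Ω).map ccA = 1 := by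
  rw [← qcoeff_zero_eq_map_ccA, frameMatrix, qcoeff_ofQcoeff, frameQ_zero]

lemma frame_gauge (b : Fin r) :
    frameMatrix Ω * frameConnection Ω b =
      Ω b * frameMatrix Ω + hbarTheta b (frameMatrix Ω) := by
  refine (gauge_iff_forall_coeff b _ _ _).2 fun d => ?_
  simp only [frameMatrix, frameConnection, qcoeff_ofQcoeff]
  rcases eq_or_ne d 0 with rfl | hd
  · exact (gauge_coeff_zero_iff (frameQ_zero Ω) b).2 (frameP_zero Ω b)
  · exact (gauge_coeff_iff (frameQ_zero Ω) (frameP_zero Ω b) hd _).2 (frameP_of_ne_zero Ω hd b)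

lemma frameP_mem_constH (hpoly : ∀ a, MatPolyH (Ω a)) (hflat : IsFlat Ω)
    (hcc : ∀ a, qcoeff 0 (Ω a) ∈ constH.matrix) (d : Fin r →₀ ℕ) (b : Fin r) :
    frameP Ω b d ∈ constH.matrix := by
  induction d using WellFoundedLT.induction generalizing b with
  | _ d ih =>
  rcases eq_or_ne d 0 with rfl | hd
  · exact frameP_zero Ω b ▸ hcc b
  have hPflat : IsFlat (frameConnection Ω) :=
    isFlat_of_gauge hflat (isUnit_of_map_ccA_eq_one frameMatrix_map_ccA) frame_gauge
  set a := pivot d hd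
  have hrest := gaugeOp_sub_gaugeOp_of_isFlat hPflat a b hd
  simp only [frameConnection, qcoeff_ofQcoeff, frameP_zero] at hrest
  refine mem_constH_of_gaugeOp_sub_gaugeOp_mem_constH (m' := d b) (pivot_ne_zero hd) (hcc a) (hcc b)
    ((frame_mem_polyH hpoly hcc d).2 b) (frameP_pivot_mem_constH hpoly hcc hd) ?_
  rw [← neg_eq_of_add_eq_zero_left hrest]
  refine neg_mem (sum_mem fun p hp => ?_)
  obtain ⟨h1, h2⟩ := lt_of_mem_properAntidiagonal hp
  exact sub_mem (mul_mem (ih _ h1 a) (ih _ h2 b)) (mul_mem (ih _ h1 b) (ih _ h2 a))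

lemma eq_frameMatrix_of_gauge (hpoly : ∀ a, MatPolyH (Ω a)) (hflat : IsFlat Ω)
    (hcc : ∀ a, qcoeff 0 (Ω a) ∈ constH.matrix) {Q : Matrix (Fin n) (Fin n) (AA r)}
    {P : Fin r → Matrix (Fin n) (Fin n) (AA r)} (hQpoly : MatPolyH Q) (hQ0 : qcoeff 0 Q = 1)
    (hPconst : ∀ b, MatConstH (P b)) (h : ∀ b, Q * P b = Ω b * Q + hbarTheta b Q) :
    Q = frameMatrix Ω := by
  have hcoeff := fun b => (gauge_iff_forall_coeff b _ _ _).1 (h b)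
  have hP0 : ∀ b, qcoeff 0 (P b) = qcoeff 0 (Ω b) := fun b =>
    (gauge_coeff_zero_iff (Qs := (qcoeff · Q)) (Ps := (qcoeff · (P b))) hQ0 b).1 (hcoeff b 0)
  have main : ∀ d, qcoeff d Q = frameQ Ω d ∧ ∀ b, qcoeff d (P b) = frameP Ω b d := by
    intro d
    induction d using WellFoundedLT.induction with
    | _ d ih =>
    rcases eq_or_ne d 0 with rfl | hd
    · exact ⟨hQ0.trans (frameQ_zero Ω).symm, fun b => (hP0 b).trans (frameP_zero Ω b).symm⟩
    have hPd : ∀ b, qcoeff d (P b) = gaugeOp (d b) (qcoeff 0 (Ω b)) (qcoeff d Q) +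
        lowerDegreeTerm (Ω b) (frameQ Ω) (frameP Ω b) d := by
      intro b
      rw [← lowerDegreeTerm_congr (fun e he => (ih e he).1) (fun e he => (ih e he).2 b)]
      exact (gauge_coeff_iff (Qs := (qcoeff · Q)) (Ps := (qcoeff · (P b))) hQ0 (hP0 b) hd _).1
        (hcoeff b d)
    have hQd : qcoeff d Q = frameQ Ω d := by
      refine sub_eq_zero.1 (eq_zero_of_gaugeOp_mem_constH (pivot_ne_zero hd) (hcc (pivot d hd))
        (sub_mem ((matPolyH_iff Q).1 hQpoly d) (frame_mem_polyH hpoly hcc d).1) ?_)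
      rw [map_sub, ← add_sub_add_right_eq_sub _ _ (lowerDegreeTerm _ (frameQ Ω) (frameP Ω _) d),
        ← hPd, ← frameP_of_ne_zero Ω hd]
      exact sub_mem ((matConstH_iff _).1 (hPconst _) d) (frameP_mem_constH hpoly hflat hcc d _)
    exact ⟨hQd, fun b => by rw [hPd b, hQd, ← frameP_of_ne_zero Ω hd b]⟩
  exact matrix_ext_qcoeff fun d => (main d).1

end canonicalFrame

end CanonicalFrame

open CanonicalFrame

theorem canonical_frame_exists_unique_general {r n : ℕ}
    (Ω : Fin r → Matrix (Fin n) (Fin n) (AA r))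
    (hpoly : ∀ a, MatPolyH (Ω a))
    (hflat : IsFlat Ω)
    (hcc : ∀ a i j, isConstH (ccA (Ω a i j))) :
    ∃! Q : Matrix (Fin n) (Fin n) (AA r),
      MatPolyH Q ∧ Q.map ccA = 1 ∧
      ∀ a, MatConstH
        (Ring.inverse Q * Ω a * Q + hbarA r • (Ring.inverse Q * thetaMat a Q)) := by
  have hcc' : ∀ a, qcoeff 0 (Ω a) ∈ constH.matrix := fun a i j => mem_constH.2 (hcc a i j)
  refine ⟨frameMatrix Ω, ⟨(matPolyH_iff _).2 fun d => (frame_mem_polyH hpoly hcc' d).1,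
    frameMatrix_map_ccA, fun a => ?_⟩, fun Q ⟨hQpoly, hQ1, hQconst⟩ => ?_⟩
  · rw [(gauge_iff_ringInverse (isUnit_of_map_ccA_eq_one frameMatrix_map_ccA) a _ _).2
      (frame_gauge a)]
    exact (matConstH_iff _).2 fun d => frameP_mem_constH hpoly hflat hcc' d a
  · have hQ := isUnit_of_map_ccA_eq_one hQ1
    exact eq_frameMatrix_of_gauge hpoly hflat hcc' hQpoly (hQ1 ▸ qcoeff_zero_eq_map_ccA Q) hQconst
      fun b => (gauge_iff_ringInverse hQ b _ _).1 rfl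

/-- **Existence and uniqueness of the canonical frame** (Theorem 3.8).
Let `Ω_a ∈ Mat_n(ℂ[ħ][[q]])` be flat connection matrices whose constant terms
`Ω_a|_{q=0}` are independent of `ħ`.  Then there is a unique gauge
transformation `Q ∈ Mat_n(ℂ[ħ][[q]])` with `Q|_{q=0} = Id` (hence `Q`
invertible) such that every `Ω̂_a = Q⁻¹·Ω_a·Q + ħ·Q⁻¹·θ_a Q` is independent
of `ħ`, i.e. has entries in `ℂ[[q]]`. -/
theorem canonical_frame_exists_unique {r n : ℕ} (hr : 1 ≤ r) (hn : 1 ≤ n)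
    (Ω : Fin r → Matrix (Fin n) (Fin n) (AA r))
    (hpoly : ∀ a, MatPolyH (Ω a))
    (hflat : IsFlat Ω)
    (hcc : ∀ a i j, isConstH (ccA (Ω a i j))) :
    ∃! Q : Matrix (Fin n) (Fin n) (AA r),
      MatPolyH Q ∧ Q.map ccA = 1 ∧
      ∀ a, MatConstH
        (Ring.inverse Q * Ω a * Q + hbarA r • (Ring.inverse Q * thetaMat a Q)) :=
  canonical_frame_exists_unique_general Ω hpoly hflat hcc
end
end

section
/- Let Ω_1,…,Ω_r ∈ Mat_n(ℂ[[q^1,…,q^r]]) (independent of ħ) satisfy θ_aΩ_b = θ_bΩ_a and Ω_aΩ_b = Ω_bΩ_a for all a, b. Let e_0 ∈ ℂ^n, set b_a := (Ω_a|_{q=0})·e_0, and assume the vectors e_0, b_1, …, b_r are linearly independent over ℂ. Assume further there are F_a ∈ m and G^b_a ∈ ℂ[[q]] such that Ω_a·e_0 = −F_a·e_0 + Σ_b G^b_a·b_b as vectors of power series, for every a. Then there exist a unique F ∈ m with F_a = θ_a F for all a, and unique δ^1,…,δ^r ∈ m with G^b_a = δ^b_a + θ_a δ^b for all a, b; that is,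 setting q̂^b := q^b·exp(δ^b), the matrix (G^b_a) is the log-Jacobi matrix ∂log q̂^b/∂log q^a of a formal coordinate change, and the new coordinates q̂^b are unique up to multiplication by nonzero constants. -/
/-!
Work over ℂ.  `OO r = ℂ[[q¹,…,qʳ]]` is the ring of formal power series,
`m` its maximal ideal (power series with zero constant term), and
`θ_a = qᵃ·∂/∂qᵃ` the logarithmic partial derivative.
-/

noncomputable section

/-- `θ_a` acting entrywise on matrices over `ℂ[[q]]`. -/
def thetaOM {r n : ℕ} (a : Fin r) (M : Matrix (Fin n) (Fin n) (OO r)) :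
    Matrix (Fin n) (Fin n) (OO r) :=
  Matrix.of fun i j => thetaO a (M i j)

/-!
Taking the coefficient of `q^d` in `Ω_a e₀ = -F_a e₀ + Σ_b G^b_a b_b` gives an identity in `ℂⁿ`
whose coefficients along the independent vectors `e₀, b_1, …, b_r` are therefore determined.
Flatness says `d_c (Ω_a)_d = d_a (Ω_c)_d`, so `d_c (F_a)_d = d_a (F_c)_d` and likewise for each
`G^b`: the families `(F_a)_a` and `(G^b_a)_a` are closed, `θ_c H_a = θ_a H_c`; at `d = 0` the
same comparison gives `G^b_a(0) = δ^b_a`. Since `Σ_a θ_a` multiplies `q^d` by `|d|`, a closed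
family has the primitive `P_d = |d|⁻¹ Σ_a (H_a)_d`, and a series in `m` is determined by its
`θ_a`-derivatives.
-/

open Matrix MvPowerSeries

theorem existsUnique_pi {ι : Type*} {β : ι → Type*} {p : ∀ i, β i → Prop}
    (h : ∀ i, ∃! x, p i x) : ∃! f : ∀ i, β i, ∀ i, p i (f i) := by
  choose f hf huniq using h
  exact ⟨f, hf, fun g hg => funext fun i => huniq i (g i) (hg i)⟩

theorem LinearIndependent.eq_of_fin_cons {R V : Type*} [Semiring R] [AddCommMonoid V]
    [Module R V] {k : ℕ} {e : V} {v : Fin k → V} (h : LinearIndependent R (Fin.cons e v))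
    {x y : R} {c c' : Fin k → R}
    (hxy : x • e + ∑ a, c a • v a = y • e + ∑ a, c' a • v a) : x = y ∧ c = c' := by
  have := Fintype.linearIndependent_iffₛ.1 h (Fin.cons x c) (Fin.cons y c')
    (by simpa only [Fin.sum_univ_succ, Fin.cons_zero, Fin.cons_succ] using hxy)
  exact ⟨this 0, funext fun a => this a.succ⟩

theorem coeff_mulVec_C {σ ι R : Type*} [CommSemiring R] [Fintype ι]
    (M : Matrix ι ι (MvPowerSeries σ R)) (e : ι → R) (d : σ →₀ ℕ) (i : ι) :
    coeff d ((M *ᵥ fun j => C (e j)) i) = (M.map (coeff d) *ᵥ e) i := by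
  simp only [Matrix.mulVec, dotProduct, map_sum, coeff_mul_C, Matrix.map_apply]

section Theta

variable {r : ℕ}

theorem ccO_eq_coeff_zero (P : OO r) : ccO P = coeff 0 P :=
  (coeff_zero_eq_constantCoeff_apply P).symm

@[simp]
theorem coeff_thetaO (a : Fin r) (P : OO r) (d : Fin r →₀ ℕ) :
    coeff d (thetaO a P) = d a * coeff d P := rfl

theorem thetaO_neg (a : Fin r) (P : OO r) : thetaO a (-P) = -thetaO a P := by
  ext d
  simp

theorem eq_of_thetaO_eq {P Q : OO r} (hθ : ∀ a, thetaO a P = thetaO a Q) (h0 : ccO P = ccO Q) :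
    P = Q := by
  ext d
  by_cases hd : d = 0
  · subst hd; simpa only [ccO_eq_coeff_zero] using h0
  · obtain ⟨a, ha⟩ := Finsupp.ne_iff.1 hd
    have := congrArg (coeff d) (hθ a)
    simp only [coeff_thetaO] at this
    exact mul_left_cancel₀ (by exact_mod_cast ha) this

-- The junk value `0⁻¹ = 0` makes the constant term vanish.
def eulerPrimitive (H : Fin r → OO r) : OO r :=
  fun d => (d.degree : ℂ)⁻¹ * ∑ a, coeff d (H a)

theorem coeff_eulerPrimitive (H : Fin r → OO r) (d : Fin r →₀ ℕ) :
    coeff d (eulerPrimitive H) = (d.degree : ℂ)⁻¹ * ∑ a, coeff d (H a) := rfl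

theorem eq_C_add_thetaO_eulerPrimitive {H : Fin r → OO r}
    (hH : ∀ a c, thetaO c (H a) = thetaO a (H c)) (a : Fin r) :
    H a = C (ccO (H a)) + thetaO a (eulerPrimitive H) := by
  ext d
  rw [map_add, coeff_C, coeff_thetaO, coeff_eulerPrimitive]
  by_cases hd : d = 0
  · subst hd; simp [ccO_eq_coeff_zero]
  · have hdeg : (d.degree : ℂ) ≠ 0 := by exact_mod_cast (Finsupp.degree_eq_zero_iff d).not.2 hd
    have hsym : ∀ c, (d a : ℂ) * coeff d (H c) = d c * coeff d (H a) := fun c => by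
      simpa using congrArg (coeff d) (hH c a)
    calc coeff d (H a) = (d.degree : ℂ)⁻¹ * (d.degree * coeff d (H a)) := by field_simp
      _ = (d.degree : ℂ)⁻¹ * ∑ c, d a * coeff d (H c) := by
        simp only [hsym, ← Finset.sum_mul, Finsupp.degree_eq_sum, Nat.cast_sum]
      _ = _ := by rw [if_neg hd, zero_add, ← Finset.mul_sum]; ring

theorem existsUnique_thetaO_primitive {H : Fin r → OO r}
    (hH : ∀ a c, thetaO c (H a) = thetaO a (H c)) :
    ∃! P : OO r, ccO P = 0 ∧ ∀ a, H a = C (ccO (H a)) + thetaO a P := by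
  refine ⟨eulerPrimitive H, ⟨?_, eq_C_add_thetaO_eulerPrimitive hH⟩, fun Q ⟨hQ0, hQ⟩ => ?_⟩
  · simp [ccO_eq_coeff_zero, coeff_eulerPrimitive]
  · refine eq_of_thetaO_eq (fun a => ?_) ?_
    · exact add_left_cancel ((hQ a).symm.trans (eq_C_add_thetaO_eulerPrimitive hH a))
    · rw [hQ0, ccO_eq_coeff_zero, coeff_eulerPrimitive]; simp

end Theta

section Expansion

variable {r n k : ℕ}

theorem map_coeff_zero (M : Matrix (Fin n) (Fin n) (OO r)) : M.map (coeff 0) = M.map ccO := by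
  ext i j
  exact (ccO_eq_coeff_zero _).symm

theorem smul_map_coeff_eq_of_thetaOM_eq {M N : Matrix (Fin n) (Fin n) (OO r)} {a c : Fin r}
    (h : thetaOM a M = thetaOM c N) (d : Fin r →₀ ℕ) :
    (d a : ℂ) • M.map (coeff d) = (d c : ℂ) • N.map (coeff d) := by
  ext i j
  exact congrArg (coeff d) (congrFun (congrFun h i) j)

theorem thetaO_comm_of_expansion {M : Fin r → Matrix (Fin n) (Fin n) (OO r)} {e : Fin n → ℂ}
    {v : Fin k → Fin n → ℂ} (hind : LinearIndependent ℂ (Fin.cons e v : Fin (k + 1) → Fin n → ℂ))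
    (hflat : ∀ a c, thetaOM a (M c) = thetaOM c (M a)) {f : Fin r → OO r}
    {g : Fin r → Fin k → OO r}
    (hM : ∀ a d, (M a).map (coeff d) *ᵥ e = coeff d (f a) • e + ∑ b, coeff d (g a b) • v b)
    (a c : Fin r) :
    thetaO c (f a) = thetaO a (f c) ∧ ∀ b, thetaO c (g a b) = thetaO a (g c b) := by
  have key : ∀ d : Fin r →₀ ℕ,
      (d c * coeff d (f a)) • e + ∑ b, (d c * coeff d (g a b)) • v b =
        (d a * coeff d (f c)) • e + ∑ b, (d a * coeff d (g c b)) • v b := fun d => by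
    have h := congrArg (· *ᵥ e) (smul_map_coeff_eq_of_thetaOM_eq (hflat c a) d)
    simpa only [Matrix.smul_mulVec, hM, smul_add, Finset.smul_sum, smul_smul] using h
  refine ⟨ext fun d => ?_, fun b => ext fun d => ?_⟩
  · simpa using (hind.eq_of_fin_cons (key d)).1
  · simpa using congrFun (hind.eq_of_fin_cons (key d)).2 b

theorem ccO_eq_ite_of_expansion {M : Fin r → Matrix (Fin n) (Fin n) (OO r)} {e : Fin n → ℂ}
    (hind : LinearIndependent ℂ
      (Fin.cons e (fun a => (M a).map ccO *ᵥ e) : Fin (r + 1) → Fin n → ℂ))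
    {f : Fin r → OO r} {g : Fin r → Fin r → OO r}
    (hM : ∀ a d, (M a).map (coeff d) *ᵥ e =
      coeff d (f a) • e + ∑ b, coeff d (g a b) • ((M b).map ccO *ᵥ e))
    (a b : Fin r) :
    ccO (g a b) = if a = b then 1 else 0 := by
  have h : (0 : ℂ) • e + ∑ b, (if a = b then 1 else 0 : ℂ) • ((M b).map ccO *ᵥ e) =
      coeff 0 (f a) • e + ∑ b, coeff 0 (g a b) • ((M b).map ccO *ᵥ e) := by
    rw [← hM, map_coeff_zero]
    simp [ite_smul]
  rw [ccO_eq_coeff_zero]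
  exact (congrFun (hind.eq_of_fin_cons h).2 b).symm

theorem map_coeff_mulVec_of_shape {Ω : Fin r → Matrix (Fin n) (Fin n) (OO r)}
    {e0 : Fin n → ℂ} {F : Fin r → OO r} {G : Fin r → Fin r → OO r}
    (hshape : ∀ a i, (Ω a *ᵥ fun j => C (e0 j)) i =
      -F a * C (e0 i) + ∑ b, G b a * C (((Ω b).map ccO *ᵥ e0) i))
    (a : Fin r) (d : Fin r →₀ ℕ) :
    (Ω a).map (coeff d) *ᵥ e0 =
      coeff d (-F a) • e0 + ∑ b, coeff d (G b a) • ((Ω b).map ccO *ᵥ e0) := by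
  ext i
  rw [← coeff_mulVec_C, hshape a i]
  simp [coeff_mul_C, Finset.sum_apply]

end Expansion

theorem mirror_transformation_general {r n : ℕ}
    (Ω : Fin r → Matrix (Fin n) (Fin n) (OO r))
    (hflat1 : ∀ a b, thetaOM a (Ω b) = thetaOM b (Ω a))
    (e0 : Fin n → ℂ)
    (hind : LinearIndependent ℂ
      (Fin.cons e0 (fun a => ((Ω a).map ccO).mulVec e0) : Fin (r + 1) → (Fin n → ℂ)))
    (F : Fin r → OO r) (hFm : ∀ a, ccO (F a) = 0)
    (G : Fin r → Fin r → OO r)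
    (hshape : ∀ a i, ((Ω a).mulVec (fun i => MvPowerSeries.C (σ := Fin r) (R := ℂ) (e0 i))) i =
      -(F a) * MvPowerSeries.C (σ := Fin r) (R := ℂ) (e0 i) +
      ∑ b, G b a * MvPowerSeries.C (σ := Fin r) (R := ℂ) ((((Ω b).map ccO).mulVec e0) i)) :
    (∃! F' : OO r, ccO F' = 0 ∧ ∀ a, F a = thetaO a F') ∧
    (∃! δ : Fin r → OO r, (∀ b, ccO (δ b) = 0) ∧
      ∀ a b, G b a = (if a = b then 1 else 0) + thetaO a (δ b)) := by
  have hM := map_coeff_mulVec_of_shape hshape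
  have hclosed := thetaO_comm_of_expansion hind hflat1 hM
  have hG0 := ccO_eq_ite_of_expansion hind hM
  constructor
  · have hFclosed : ∀ a c, thetaO c (F a) = thetaO a (F c) := fun a c => by
      simpa only [thetaO_neg, neg_inj] using (hclosed a c).1
    simpa only [hFm, map_zero, zero_add] using existsUnique_thetaO_primitive hFclosed
  · have hδ := existsUnique_pi fun b =>
      existsUnique_thetaO_primitive (H := fun a => G b a) fun a c => (hclosed a c).2 b
    simp only [hG0, apply_ite C, map_one, map_zero, forall_and] at hδ
    refine (existsUnique_congr fun δ => and_congr_right fun _ => forall_comm).1 hδ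

/-- **Existence and uniqueness of the mirror transformation** (Theorem 3.14).
Let `Ω_a ∈ Mat_n(ℂ[[q]])` (the `ħ`-independent connection matrices of a
canonical frame) satisfy `θ_aΩ_b = θ_bΩ_a` and `[Ω_a, Ω_b] = 0`; let `e₀` be
such that `e₀, p_1e₀, …, p_re₀` (with `p_a = Ω_a|_{q=0}`, `b_a = p_ae₀`) are
linearly independent, and suppose
`Ω_a e₀ = −F_a e₀ + Σ_b G^b_a·b_b` with `F_a ∈ m`, `G^b_a ∈ ℂ[[q]]`.
Then there are a unique `F ∈ m` with `F_a = θ_a F` and unique `δ¹,…,δʳ ∈ m`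
with `G^b_a = δ^b_a + θ_a δ^b`; i.e. `(G^b_a)` is the log-Jacobi matrix of the
coordinate change `q̂^b = q^b·exp(δ^b)`, the new coordinates being unique up to
nonzero constant multiples. -/
theorem mirror_transformation {r n : ℕ} (hr : 1 ≤ r) (hn : 1 ≤ n)
    (Ω : Fin r → Matrix (Fin n) (Fin n) (OO r))
    (hflat1 : ∀ a b, thetaOM a (Ω b) = thetaOM b (Ω a))
    (hflat2 : ∀ a b, Ω a * Ω b = Ω b * Ω a)
    (e0 : Fin n → ℂ)
    (hind : LinearIndependent ℂ
      (Fin.cons e0 (fun a => ((Ω a).map ccO).mulVec e0) : Fin (r + 1) → (Fin n → ℂ)))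
    (F : Fin r → OO r) (hFm : ∀ a, ccO (F a) = 0)
    (G : Fin r → Fin r → OO r)
    (hshape : ∀ a i, ((Ω a).mulVec (fun i => MvPowerSeries.C (σ := Fin r) (R := ℂ) (e0 i))) i =
      -(F a) * MvPowerSeries.C (σ := Fin r) (R := ℂ) (e0 i) +
      ∑ b, G b a * MvPowerSeries.C (σ := Fin r) (R := ℂ) ((((Ω b).map ccO).mulVec e0) i)) :
    (∃! F' : OO r, ccO F' = 0 ∧ ∀ a, F a = thetaO a F') ∧
    (∃! δ : Fin r → OO r, (∀ b, ccO (δ b) = 0) ∧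
      ∀ a b, G b a = (if a = b then 1 else 0) + thetaO a (δ b)) :=
  mirror_transformation_general Ω hflat1 e0 hind F hFm G hshape
end
end

section
/- Let Ω_1,…,Ω_r ∈ Mat_n(ℂ[ħ][[q]]) be flat with Ω_a|_{q=0} independent of ħ, let μ ∈ Mat_n(ℂ) and w_1,…,w_r ∈ ℤ, set E := 2ħ·∂/∂ħ + Σ_b w_b·θ_b (acting entrywise), and suppose E(Ω_a) + μΩ_a − Ω_aμ = 2Ω_a for all a. Then the unique Q ∈ Mat_n(ℂ[ħ][[q]]) with Q|_{q=0} = Id for which every Ω̂_a := Q^{-1}Ω_aQ + ħQ^{-1}θ_aQ is independent of ħ additionally satisfies E(Q) + μQ − Qμ = 0, i.e. the canonical gauge transformation is degree-preserving. -/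
/-!
Work over ℂ.  We represent the coefficient ring `ℂ[ħ,ħ⁻¹]]` (formal Laurent
series `Σ_{k ≤ K} c_k ħ^k` with finitely many positive powers of `ħ`) as
`LaurentSeries ℂ` in the variable `t = ħ⁻¹`; thus the coefficient of `t^k`
is the coefficient of `ħ^{-k}`.  `AA r = ℂ[ħ,ħ⁻¹]][[q¹,…,qʳ]]`, and
`θ_a = qᵃ·∂/∂qᵃ` is the logarithmic partial derivative.
-/

noncomputable section

/-- Diagonal rescaling of a Laurent series: the coefficient of `ħ^{-k}`
is multiplied by `f k`. -/
def scaleL (f : ℤ → ℂ) (x : LS) : LS :=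
  ⟨fun k => f k * x.coeff k,
   x.isPWO_support'.mono (fun k hk => by
     simp only [Function.mem_support, ne_eq] at hk ⊢
     exact fun h => hk (by rw [h, mul_zero]))⟩

/-- Euler operator `E = 2ħ·∂/∂ħ + Σ_b w_b·θ_b`: on the monomial `ħ^j q^d`
(`= t^{-j} q^d`) it acts by multiplication by `2j + Σ_b w_b·d_b`. -/
def eulerA {r : ℕ} (w : Fin r → ℤ) (x : AA r) : AA r :=
  fun d => scaleL (fun k => (((∑ b, w b * (d b : ℤ)) - 2 * k : ℤ) : ℂ)) (x d)

/-- The Euler operator acting entrywise on matrices. -/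
def eulerMat {r n : ℕ} (w : Fin r → ℤ) (M : Matrix (Fin n) (Fin n) (AA r)) :
    Matrix (Fin n) (Fin n) (AA r) :=
  Matrix.of fun i j => eulerA w (M i j)


/-!
The graded Euler operator `𝓔 X = E(X) + [μ, X]` is a derivation on matrices that commutes with
every `θ_a` and satisfies `𝓔(ħ X) = 2ħ X + ħ 𝓔(X)`. Applying it to `Q Ω̂_a = Ω_a Q + ħ θ_a Q`
shows that `T = Q⁻¹ 𝓔(Q)` satisfies `Ω̂_a T + ħ θ_a T = T Ω̂_a + R_a`, where
`R_a = 𝓔(Ω̂_a) - 2 Ω̂_a` is independent of `ħ` like `Ω̂_a`. Moreover `T` is polynomial in `ħ`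
(as `Q⁻¹` is, `Q` being `1` at `q = 0`) and vanishes at `q = 0`. By induction on the `q`-degree
`d`, with `d_a ≠ 0`, the coefficient `T_d` satisfies
`Ω̂_a(0) T_d + d_a ħ T_d = T_d Ω̂_a(0) + R_{a,d}`. Comparing powers of `ħ`, starting from the
top one, gives `T_d = 0`; hence `𝓔(Q) = 0`.
-/

section LaurentSeries

open HahnSeries

lemma scaleL_coeff (f : ℤ → ℂ) (x : LS) (k : ℤ) : (scaleL f x).coeff k = f k * x.coeff k := rfl

def scaleLHom (f : ℤ → ℂ) : LS →+ LS where
  toFun := scaleL f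
  map_zero' := by ext; simp [scaleL_coeff]
  map_add' x y := by ext; simp [scaleL_coeff, mul_add]

lemma scaleLHom_apply (f : ℤ → ℂ) (x : LS) : scaleLHom f x = scaleL f x := rfl

lemma support_scaleL_subset (f : ℤ → ℂ) (x : LS) : (scaleL f x).support ⊆ x.support :=
  fun k hk h => hk (by rw [scaleL_coeff, h, mul_zero])

lemma scaleL_mul {f g h : ℤ → ℂ} (H : ∀ i j, h (i + j) = f i + g j) (x y : LS) :
    scaleL h (x * y) = scaleL f x * y + x * scaleL g y := by
  ext k
  rw [coeff_add, scaleL_coeff, coeff_mul,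
    coeff_mul_left' x.isPWO_support (support_scaleL_subset f x),
    coeff_mul_right' y.isPWO_support (support_scaleL_subset g y),
    Finset.mul_sum, ← Finset.sum_add_distrib]
  refine Finset.sum_congr rfl fun ij hij => ?_
  obtain ⟨-, -, rfl⟩ := Finset.mem_antidiagonal.mp hij
  rw [H, scaleL_coeff, scaleL_coeff]
  ring

lemma hbarL_mul_coeff (x : LS) (k : ℤ) : (hbarL * x).coeff k = x.coeff (k + 1) := by
  conv_lhs => rw [show k = (k + 1) + (-1) by ring]
  rw [hbarL, coeff_single_mul_add, one_mul]

lemma natCast_mul_coeff (m : ℕ) (x : LS) (k : ℤ) :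
    ((m : LS) * x).coeff k = m * x.coeff k := by
  rw [← map_natCast (C (R := ℂ) (Γ := ℤ)) m, C_mul_eq_smul, coeff_smul, smul_eq_mul]

lemma isPolyH_mul {x y : LS} (hx : isPolyH x) (hy : isPolyH y) : isPolyH (x * y) := by
  intro k hk
  rw [coeff_mul]
  refine Finset.sum_eq_zero fun ij hij => ?_
  obtain ⟨-, -, hsum⟩ := Finset.mem_antidiagonal.mp hij
  rcases lt_or_ge 0 ij.1 with h | h
  · rw [hx _ h, zero_mul]
  · rw [hy _ (by omega), mul_zero]

/-- `ℂ[ħ]` as a subring of `ℂ[ħ,ħ⁻¹]]`. -/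
def polyH : Subring LS where
  carrier := {x | isPolyH x}
  mul_mem' := isPolyH_mul
  one_mem' k hk := by rw [coeff_one, if_neg hk.ne']
  add_mem' hx hy k hk := by rw [coeff_add, hx k hk, hy k hk, add_zero]
  zero_mem' _ _ := rfl
  neg_mem' hx k hk := by rw [coeff_neg, hx k hk, neg_zero]

lemma isConstH_iff_mem_range_C (x : LS) : isConstH x ↔ x ∈ (C : ℂ →+* LS).range := by
  constructor
  · intro hx
    refine ⟨x.coeff 0, ?_⟩
    ext k
    rcases eq_or_ne k 0 with rfl | hk
    · simp
    · rw [C_apply, coeff_single_of_ne hk, hx k hk]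
  · rintro ⟨c, rfl⟩ k hk
    rw [C_apply, coeff_single_of_ne hk]

lemma range_C_le_polyH : (C : ℂ →+* LS).range ≤ polyH := by
  rintro _ ⟨c, rfl⟩ k hk
  rw [C_apply, coeff_single_of_ne hk.ne']

lemma scaleL_mem_polyH (f : ℤ → ℂ) {x : LS} (hx : x ∈ polyH) : scaleL f x ∈ polyH := by
  intro k hk
  rw [scaleL_coeff, hx k hk, mul_zero]

lemma scaleL_mem_range_C (f : ℤ → ℂ) {x : LS} (hx : x ∈ (C : ℂ →+* LS).range) :
    scaleL f x ∈ (C : ℂ →+* LS).range := by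
  rw [← isConstH_iff_mem_range_C] at hx ⊢
  intro k hk
  rw [scaleL_coeff, hx k hk, mul_zero]

end LaurentSeries

namespace MvPowerSeries

variable {σ R S : Type*}

lemma mem_range_map_iff [Ring R] [Ring S] (f : R →+* S) (x : MvPowerSeries σ S) :
    x ∈ (map f).range ↔ ∀ d, coeff d x ∈ f.range := by
  constructor
  · rintro ⟨y, rfl⟩ d
    exact ⟨coeff d y, (coeff_map f d y).symm⟩
  · intro hx
    choose y hy using hx
    exact ⟨(y : MvPowerSeries σ R), ext fun d => (coeff_map f d _).trans (hy d)⟩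

section Matrix

variable {ι : Type*} [Fintype ι]

lemma map_coeff_mem_matrix [Ring R] [Ring S] [DecidableEq ι] {f : R →+* S}
    {M : Matrix ι ι (MvPowerSeries σ S)} (hM : M ∈ (map f).range.matrix) (d : σ →₀ ℕ) :
    M.map (coeff d) ∈ f.range.matrix :=
  fun i j => (mem_range_map_iff f _).mp (hM i j) d

theorem isUnit_and_ringInverse_mem_matrix_range_map [CommRing R] [CommRing S] [DecidableEq ι]
    {f : R →+* S} (hf : Function.Injective f) {Q : Matrix ι ι (MvPowerSeries σ S)}
    (hQ : Q ∈ (map f).range.matrix) (hQ0 : Q.map constantCoeff = 1) :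
    IsUnit Q ∧ Ring.inverse Q ∈ (map f).range.matrix := by
  choose Q' hQ' using hQ
  have hlift : (map f).mapMatrix (Matrix.of Q') = Q := Matrix.ext hQ'
  have hdet : constantCoeff (Matrix.of Q').det = 1 := hf <| by
    rw [map_one, ← constantCoeff_map, RingHom.map_det, hlift, RingHom.map_det,
      RingHom.mapMatrix_apply, hQ0, Matrix.det_one]
  obtain ⟨u, hu⟩ : IsUnit (Matrix.of Q') := (Matrix.isUnit_iff_isUnit_det _).mpr
    (isUnit_iff_constantCoeff.mpr (hdet ▸ isUnit_one))
  have hQu : Q = ↑(Units.map (map f).mapMatrix.toMonoidHom u) := by rw [← hlift, ← hu]; rfl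
  rw [hQu, Ring.inverse_unit, Units.coe_map_inv]
  exact ⟨Units.isUnit _, fun i j => ⟨_, rfl⟩⟩

lemma coeff_mul_eq_constantCoeff_mul_of_forall_lt [Semiring R] {d : σ →₀ ℕ}
    {x y : MvPowerSeries σ R} (hy : ∀ e < d, coeff e y = 0) :
    coeff d (x * y) = constantCoeff x * coeff d y := by
  classical
  rw [coeff_mul, ← coeff_zero_eq_constantCoeff_apply]
  refine Finset.sum_eq_single_of_mem (0, d) (by simp) fun p hp hne => ?_
  rw [Finset.HasAntidiagonal.mem_antidiagonal] at hp
  have hp1 : p.1 ≠ 0 := fun h0 => hne (Prod.ext h0 (by rw [← hp, h0, zero_add]))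
  rw [hy p.2 (hp ▸ lt_add_of_pos_left _ (pos_iff_ne_zero.mpr hp1)), mul_zero]

lemma map_coeff_mul_of_forall_lt [CommSemiring R] {d : σ →₀ ℕ}
    {X T : Matrix ι ι (MvPowerSeries σ R)} (hT : ∀ e < d, T.map (coeff e) = 0) :
    (X * T).map (coeff d) = X.map constantCoeff * T.map (coeff d) ∧
      (T * X).map (coeff d) = T.map (coeff d) * X.map constantCoeff := by
  have hTe : ∀ e < d, ∀ i j, coeff e (T i j) = 0 := fun e he i j => congrFun₂ (hT e he) i j
  constructor <;> ext i j <;> simp only [Matrix.map_apply, Matrix.mul_apply, map_sum]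
  · exact Finset.sum_congr rfl fun l _ =>
      coeff_mul_eq_constantCoeff_mul_of_forall_lt fun e he => hTe e he l j
  · refine Finset.sum_congr rfl fun l _ => ?_
    rw [mul_comm, coeff_mul_eq_constantCoeff_mul_of_forall_lt fun e he => hTe e he i l, mul_comm]

end Matrix

end MvPowerSeries

section Leibniz

variable {A : Type*}

/-- Mathlib's `Derivation` requires a commutative algebra, which matrix rings are not. -/
def IsLeibniz [NonUnitalNonAssocSemiring A] (D : A →+ A) : Prop :=
  ∀ x y, D (x * y) = D x * y + x * D y

lemma IsLeibniz.add [NonUnitalNonAssocSemiring A] {D D' : A →+ A} (hD : IsLeibniz D)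
    (hD' : IsLeibniz D') : IsLeibniz (D + D') := fun x y => by
  simp only [AddMonoidHom.add_apply, hD x y, hD' x y, add_mul, mul_add]
  abel

lemma isLeibniz_commutator [Ring A] (a : A) :
    IsLeibniz (AddMonoidHom.mulLeft a - AddMonoidHom.mulRight a) := fun x y => by
  simp only [AddMonoidHom.sub_apply, AddMonoidHom.coe_mulLeft, AddMonoidHom.coe_mulRight]
  noncomm_ring

lemma IsLeibniz.mapMatrix [NonUnitalNonAssocSemiring A] {n : Type*} [Fintype n] {D : A →+ A}
    (hD : IsLeibniz D) : IsLeibniz (D.mapMatrix : Matrix n n A →+ Matrix n n A) := fun M N => by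
  ext i j
  simp only [AddMonoidHom.mapMatrix_apply, Matrix.map_apply, Matrix.add_apply, Matrix.mul_apply,
    map_sum, hD _ _, Finset.sum_add_distrib]

end Leibniz

section Operators

variable {r : ℕ}

open MvPowerSeries

/-- The diagonal operator `t^k q^d ↦ φ d k • t^k q^d`; `θ_a` and the Euler operator are of
this form. -/
def weightHom (φ : (Fin r →₀ ℕ) → ℤ → ℂ) : AA r →+ AA r where
  toFun x d := scaleL (φ d) (x d)
  map_zero' := funext fun d => map_zero (scaleLHom (φ d))
  map_add' x y := funext fun d => map_add (scaleLHom (φ d)) (x d) (y d)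

lemma coeff_weightHom (φ : (Fin r →₀ ℕ) → ℤ → ℂ) (x : AA r) (d : Fin r →₀ ℕ) :
    coeff d (weightHom φ x) = scaleL (φ d) (coeff d x) := rfl

lemma weightHom_mul {φ : (Fin r →₀ ℕ) → ℤ → ℂ}
    (hφ : ∀ d e k l, φ (d + e) (k + l) = φ d k + φ e l) (x y : AA r) :
    weightHom φ (x * y) = weightHom φ x * y + x * weightHom φ y := by
  ext d : 1
  rw [map_add, coeff_weightHom, coeff_mul, coeff_mul, coeff_mul, ← scaleLHom_apply, map_sum,
    ← Finset.sum_add_distrib]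
  refine Finset.sum_congr rfl fun p hp => ?_
  rw [Finset.HasAntidiagonal.mem_antidiagonal] at hp
  rw [scaleLHom_apply, coeff_weightHom, coeff_weightHom,
    scaleL_mul fun k l => by rw [← hp, hφ]]

lemma weightHom_comm (φ ψ : (Fin r →₀ ℕ) → ℤ → ℂ) (x : AA r) :
    weightHom φ (weightHom ψ x) = weightHom ψ (weightHom φ x) := by
  ext d : 1
  ext k
  simp only [coeff_weightHom, scaleL_coeff]
  ring

lemma weightHom_C_C {φ : (Fin r →₀ ℕ) → ℤ → ℂ} (hφ : φ 0 0 = 0) (c : ℂ) :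
    weightHom φ (C (HahnSeries.C c)) = 0 := by
  ext d : 1
  ext k
  rw [coeff_weightHom, scaleL_coeff, coeff_C, map_zero, HahnSeries.coeff_zero]
  split_ifs with hd
  · rcases eq_or_ne k 0 with rfl | hk
    · rw [hd, hφ, zero_mul]
    · rw [HahnSeries.C_apply, HahnSeries.coeff_single_of_ne hk, mul_zero]
  · rw [HahnSeries.coeff_zero, mul_zero]

lemma constantCoeff_weightHom_eq_zero {φ : (Fin r →₀ ℕ) → ℤ → ℂ} (hφ : φ 0 0 = 0) {x : AA r}
    (hx : isConstH (constantCoeff x)) : constantCoeff (weightHom φ x) = 0 := by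
  ext k
  rw [← coeff_zero_eq_constantCoeff_apply, coeff_weightHom, scaleL_coeff,
    coeff_zero_eq_constantCoeff_apply, HahnSeries.coeff_zero]
  rcases eq_or_ne k 0 with rfl | hk
  · rw [hφ, zero_mul]
  · rw [hx k hk, mul_zero]

def eulerHom (w : Fin r → ℤ) : AA r →+ AA r :=
  weightHom fun d k => ((∑ b, w b * (d b : ℤ) - 2 * k : ℤ) : ℂ)

def thetaHom (a : Fin r) : AA r →+ AA r where
  toFun := thetaA a
  map_zero' := funext fun _ => mul_zero _
  map_add' _ _ := funext fun _ => mul_add _ _ _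

lemma thetaHom_eq_weightHom (a : Fin r) : thetaHom a = weightHom fun d _ => (d a : ℂ) :=
  AddMonoidHom.ext fun _ => funext fun _ => HahnSeries.ext <| funext fun _ => natCast_mul_coeff ..

lemma eulerHom_mul (w : Fin r → ℤ) (x y : AA r) :
    eulerHom w (x * y) = eulerHom w x * y + x * eulerHom w y :=
  weightHom_mul (fun d e k l => by
    push_cast [Finsupp.add_apply, mul_add, Finset.sum_add_distrib]; ring) x y

lemma thetaHom_mul (a : Fin r) (x y : AA r) :
    thetaHom a (x * y) = thetaHom a x * y + x * thetaHom a y := by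
  rw [thetaHom_eq_weightHom]
  exact weightHom_mul (fun d e k l => by simp only [Finsupp.add_apply]; push_cast; ring) x y

lemma eulerHom_thetaHom (w : Fin r → ℤ) (a : Fin r) (x : AA r) :
    eulerHom w (thetaHom a x) = thetaHom a (eulerHom w x) := by
  rw [thetaHom_eq_weightHom]
  exact weightHom_comm _ _ x

lemma eulerHom_hbarA_mul (w : Fin r → ℤ) (x : AA r) :
    eulerHom w (hbarA r * x) = hbarA r * x + hbarA r * x + hbarA r * eulerHom w x := by
  ext d : 1
  ext k
  simp only [hbarA, map_add, coeff_weightHom, coeff_C_mul, eulerHom, scaleL_coeff,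
    HahnSeries.coeff_add, hbarL_mul_coeff]
  push_cast
  ring

/-- `ℂ[ħ][[q]]` inside `AA r`. -/
abbrev polySeries (r : ℕ) : Subring (AA r) := (map polyH.subtype).range

/-- `ℂ[[q]]` inside `AA r`. -/
abbrev constSeries (r : ℕ) : Subring (AA r) := (map (HahnSeries.C : ℂ →+* LS)).range

lemma constSeries_le_polySeries : constSeries r ≤ polySeries r := fun x hx => by
  rw [mem_range_map_iff, Subring.range_subtype] at *
  exact fun d => range_C_le_polyH (hx d)

lemma weightHom_mem_polySeries (φ : (Fin r →₀ ℕ) → ℤ → ℂ) {x : AA r} (hx : x ∈ polySeries r) :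
    weightHom φ x ∈ polySeries r := by
  rw [mem_range_map_iff, Subring.range_subtype] at *
  exact fun d => scaleL_mem_polyH _ (hx d)

lemma weightHom_mem_constSeries (φ : (Fin r →₀ ℕ) → ℤ → ℂ) {x : AA r}
    (hx : x ∈ constSeries r) : weightHom φ x ∈ constSeries r := by
  rw [mem_range_map_iff] at *
  exact fun d => scaleL_mem_range_C _ (hx d)

variable {n : ℕ}

lemma matPolyH_iff (M : Matrix (Fin n) (Fin n) (AA r)) :
    MatPolyH M ↔ M ∈ (polySeries r).matrix := by
  refine forall₂_congr fun i j => ?_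
  change _ ↔ M i j ∈ polySeries r
  rw [mem_range_map_iff, Subring.range_subtype]
  rfl

lemma matConstH_iff (M : Matrix (Fin n) (Fin n) (AA r)) :
    MatConstH M ↔ M ∈ (constSeries r).matrix := by
  refine forall₂_congr fun i j => ?_
  change _ ↔ M i j ∈ constSeries r
  rw [mem_range_map_iff]
  exact forall_congr' fun d => isConstH_iff_mem_range_C _

lemma map_cA_mem_constSeries_matrix (μ : Matrix (Fin n) (Fin n) ℂ) :
    μ.map (cA r) ∈ (constSeries r).matrix :=
  fun i j => ⟨C (μ i j), map_C _ _⟩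

end Operators

section GradedEuler

variable {r n : ℕ} (w : Fin r → ℤ)

open MvPowerSeries

def gradedEuler (ν : Matrix (Fin n) (Fin n) (AA r)) :
    Matrix (Fin n) (Fin n) (AA r) →+ Matrix (Fin n) (Fin n) (AA r) :=
  (eulerHom w).mapMatrix + (AddMonoidHom.mulLeft ν - AddMonoidHom.mulRight ν)

lemma gradedEuler_apply (ν X : Matrix (Fin n) (Fin n) (AA r)) :
    gradedEuler w ν X = eulerMat w X + ν * X - X * ν :=
  add_sub_assoc _ _ _ |>.symm

lemma isLeibniz_gradedEuler (ν : Matrix (Fin n) (Fin n) (AA r)) : IsLeibniz (gradedEuler w ν) :=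
  (IsLeibniz.mapMatrix fun x y => eulerHom_mul w x y).add (isLeibniz_commutator ν)

lemma gradedEuler_hbarA_smul (ν X : Matrix (Fin n) (Fin n) (AA r)) :
    gradedEuler w ν (hbarA r • X) =
      hbarA r • X + hbarA r • X + hbarA r • gradedEuler w ν X := by
  have hE : eulerMat w (hbarA r • X) = hbarA r • X + hbarA r • X + hbarA r • eulerMat w X := by
    ext i j : 1
    exact eulerHom_hbarA_mul w (X i j)
  rw [gradedEuler_apply, gradedEuler_apply, hE, Matrix.mul_smul ν (hbarA r) X,
    Matrix.smul_mul (hbarA r) X ν, smul_sub (hbarA r) (eulerMat w X + ν * X),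
    smul_add (hbarA r) (eulerMat w X)]
  abel

lemma gradedEuler_thetaMat (a : Fin r) (μ : Matrix (Fin n) (Fin n) ℂ)
    (X : Matrix (Fin n) (Fin n) (AA r)) :
    gradedEuler w (μ.map (cA r)) (thetaMat a X) = thetaMat a (gradedEuler w (μ.map (cA r)) X) := by
  have hθ : IsLeibniz ((thetaHom a).mapMatrix : Matrix (Fin n) (Fin n) (AA r) →+ _) :=
    IsLeibniz.mapMatrix fun x y => thetaHom_mul a x y
  have hμ : (thetaHom a).mapMatrix (μ.map (cA r)) = 0 := by
    rw [thetaHom_eq_weightHom]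
    ext i j : 1
    exact weightHom_C_C (by simp) _
  have hcomm : eulerMat w (thetaMat a X) = thetaMat a (eulerMat w X) := by
    ext i j : 1
    exact eulerHom_thetaHom w a (X i j)
  change _ = (thetaHom a).mapMatrix _
  rw [gradedEuler_apply, gradedEuler_apply, hcomm, map_sub, map_add, hθ, hθ, hμ, zero_mul,
    mul_zero, zero_add, add_zero]
  rfl

lemma gradedEuler_mem_matrix {T : Subring (AA r)} (hT : ∀ x ∈ T, eulerHom w x ∈ T)
    {ν X : Matrix (Fin n) (Fin n) (AA r)} (hν : ν ∈ T.matrix) (hX : X ∈ T.matrix) :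
    gradedEuler w ν X ∈ T.matrix := by
  rw [gradedEuler_apply]
  exact sub_mem (add_mem (fun i j => hT _ (hX i j)) (mul_mem hν hX)) (mul_mem hX hν)

lemma map_constantCoeff_gradedEuler (ν : Matrix (Fin n) (Fin n) (AA r))
    {Q : Matrix (Fin n) (Fin n) (AA r)} (hQ : Q.map constantCoeff = 1) :
    (gradedEuler w ν Q).map constantCoeff = 0 := by
  have hE : constantCoeff.mapMatrix (eulerMat w Q) = 0 := by
    ext i j : 1
    change constantCoeff (eulerHom w (Q i j)) = 0
    refine constantCoeff_weightHom_eq_zero ?_ ((isConstH_iff_mem_range_C _).mpr ?_)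
    · simp
    rw [← Matrix.map_apply (f := constantCoeff), hQ, Matrix.one_apply]
    split_ifs
    exacts [one_mem _, zero_mem _]
  change constantCoeff.mapMatrix _ = 0
  rw [gradedEuler_apply, map_sub, map_add, map_mul, map_mul, hE,
    show constantCoeff.mapMatrix Q = 1 from hQ, mul_one, one_mul, zero_add, sub_self]

end GradedEuler

theorem gauge_equation_of_isLeibniz {R ι : Type*} [CommRing R] [Fintype ι] [DecidableEq ι]
    {E θ : Matrix ι ι R →+ Matrix ι ι R} (hE : IsLeibniz E) (hθ : IsLeibniz θ)
    (hEθ : ∀ X, E (θ X) = θ (E X)) {h : R} (hEh : ∀ X, E (h • X) = h • X + h • X + h • E X)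
    {Q Ω Ω' T : Matrix ι ι R} (hQ : IsUnit Q) (hΩ : E Ω = Ω + Ω)
    (hΩ' : Ω' = Ring.inverse Q * Ω * Q + h • (Ring.inverse Q * θ Q))
    (hT : T = Ring.inverse Q * E Q) :
    Ω' * T + h • θ T = T * Ω' + (E Ω' - Ω' - Ω') := by
  replace hΩ' : Q * Ω' = Ω * Q + h • θ Q := by
    rw [hΩ', mul_add, Matrix.mul_smul, ← mul_assoc, ← mul_assoc, ← mul_assoc,
      Ring.mul_inverse_cancel Q hQ, one_mul, one_mul]
  replace hT : Q * T = E Q := hT ▸ Ring.mul_inverse_cancel_left Q _ hQ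
  have key := congrArg E hΩ'
  rw [hE, map_add, hE, hΩ, hEh, hEθ, ← hT, hθ] at key
  apply hQ.mul_left_cancel
  calc Q * (Ω' * T + h • θ T) = (Ω * Q + h • θ Q) * T + h • (Q * θ T) := by
        rw [mul_add, ← mul_assoc, hΩ', Matrix.mul_smul]
    _ = Q * T * Ω' + Q * E Ω' - Q * Ω' - Q * Ω' := by
        rw [key, hΩ']
        simp only [add_mul, Matrix.smul_mul, smul_add, mul_assoc]
        abel
    _ = Q * (T * Ω' + (E Ω' - Ω' - Ω')) := by noncomm_ring

section Vanishing

open HahnSeries in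
/-- Comparing coefficients of `t^k` gives `c S_{k+1} = [S_k, A]` for `k ≠ 0`, so the
coefficients vanish upwards from below the order of `S` until `k = 0`, and for `k > 0` because
`S` is polynomial in `ħ`. -/
lemma eq_zero_of_mul_add_hbarL_smul {ι : Type*} [Fintype ι] [DecidableEq ι] {A S B : Matrix ι ι LS}
    {c : ℕ} (hc : c ≠ 0) (hA : A ∈ (C : ℂ →+* LS).range.matrix)
    (hB : B ∈ (C : ℂ →+* LS).range.matrix) (hS : S ∈ polyH.matrix)
    (h : A * S + hbarL • (c : LS) • S = S * A + B) : S = 0 := by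
  choose A₀ hA₀ using hA
  set coeffMat : ℤ → Matrix ι ι ℂ := fun k => S.map (coeff · k)
  have hstep : ∀ k ≠ 0, coeffMat k = 0 → coeffMat (k + 1) = 0 := by
    intro k hk hSk
    ext i j
    have hSk' : ∀ i j, (S i j).coeff k = 0 := fun i j => congrFun₂ hSk i j
    have hij := congrArg (fun M : Matrix ι ι LS => (M i j).coeff k) h
    simp only [Matrix.add_apply, Matrix.mul_apply, Matrix.smul_apply, coeff_add, coeff_sum,
      ← hA₀, smul_eq_mul, hbarL_mul_coeff, natCast_mul_coeff, C_apply, coeff_single_zero_mul,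
      coeff_mul_single_zero, hSk', (isConstH_iff_mem_range_C _).mpr (hB i j) k hk, mul_zero,
      zero_mul, Finset.sum_const_zero, zero_add, add_zero] at hij
    exact (mul_eq_zero.mp hij).resolve_left (Nat.cast_ne_zero.mpr hc)
  obtain ⟨b, hb⟩ := (Set.finite_range fun p : ι × ι => (S p.1 p.2).order).bddBelow
  have hlow : ∀ k < b, coeffMat k = 0 := fun k hk => by
    ext i j
    exact coeff_eq_zero_of_lt_order (hk.trans_le (hb ⟨(i, j), rfl⟩))
  have hmid : ∀ k, b - 1 ≤ k → k ≤ 0 → coeffMat k = 0 :=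
    Int.leInduction (fun _ => hlow _ (by omega))
      fun k _ ih hk => hstep k (by omega) (ih (by omega))
  ext i j k
  rcases lt_or_ge k (b - 1) with hkb | hkb
  · exact congrFun₂ (hlow k (by omega)) i j
  rcases le_or_gt k 0 with hk | hk
  · exact congrFun₂ (hmid k hkb hk) i j
  · exact hS i j k hk

open MvPowerSeries

lemma eq_zero_of_gauge_equation {r n : ℕ} {Ω R : Fin r → Matrix (Fin n) (Fin n) (AA r)}
    (hΩ : ∀ a, Ω a ∈ (constSeries r).matrix) (hR : ∀ a, R a ∈ (constSeries r).matrix)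
    {T : Matrix (Fin n) (Fin n) (AA r)} (hT : T ∈ (polySeries r).matrix)
    (hT0 : T.map constantCoeff = 0)
    (h : ∀ a, Ω a * T + hbarA r • thetaMat a T = T * Ω a + R a) : T = 0 := by
  suffices hcoeff : ∀ d, T.map (coeff d) = 0 by
    ext i j : 1
    exact MvPowerSeries.ext fun d => congrFun₂ (hcoeff d) i j
  intro d
  induction d using WellFoundedLT.induction with
  | _ d ih =>
  rcases eq_or_ne d 0 with rfl | hd
  · simpa only [coeff_zero_eq_constantCoeff] using hT0
  obtain ⟨a, ha⟩ := Finsupp.ne_iff.mp hd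
  obtain ⟨hl, hr⟩ := map_coeff_mul_of_forall_lt (X := Ω a) ih
  have hθ : (hbarA r • thetaMat a T).map (coeff d) = hbarL • ((d a : LS) • T.map (coeff d)) := by
    ext i j : 1
    exact coeff_C_mul _ _ _
  have hd := congrArg (Matrix.map · (coeff d)) (h a)
  simp only [Matrix.map_add _ (map_add (coeff d)), hl, hr, hθ] at hd
  have hT' := map_coeff_mem_matrix hT d
  rw [Subring.range_subtype] at hT'
  exact eq_zero_of_mul_add_hbarL_smul ha
    (coeff_zero_eq_constantCoeff (R := LS) ▸ map_coeff_mem_matrix (hΩ a) 0)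
    (map_coeff_mem_matrix (hR a) d) hT' hd

end Vanishing

theorem canonical_gauge_graded_general {r n : ℕ}
    (Ω : Fin r → Matrix (Fin n) (Fin n) (AA r))
    (μ : Matrix (Fin n) (Fin n) ℂ) (w : Fin r → ℤ)
    (hgrade : ∀ a, eulerMat w (Ω a) + μ.map (cA r) * Ω a - Ω a * μ.map (cA r)
      = Ω a + Ω a)
    (Q : Matrix (Fin n) (Fin n) (AA r))
    (hQpoly : MatPolyH Q) (hQcc : Q.map ccA = 1)
    (hQgauge : ∀ a, MatConstH
      (Ring.inverse Q * Ω a * Q + hbarA r • (Ring.inverse Q * thetaMat a Q))) :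
    eulerMat w Q + μ.map (cA r) * Q - Q * μ.map (cA r) = 0 := by
  set ν := μ.map (cA r)
  set Ω' := fun a => Ring.inverse Q * Ω a * Q + hbarA r • (Ring.inverse Q * thetaMat a Q)
  rw [matPolyH_iff] at hQpoly
  obtain ⟨hQ, hP⟩ := MvPowerSeries.isUnit_and_ringInverse_mem_matrix_range_map
    polyH.subtype_injective hQpoly hQcc
  have hΩ' : ∀ a, Ω' a ∈ (constSeries r).matrix := fun a => (matConstH_iff _).mp (hQgauge a)
  have hν : ν ∈ (constSeries r).matrix := map_cA_mem_constSeries_matrix μ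
  suffices Ring.inverse Q * gradedEuler w ν Q = 0 by
    rw [← gradedEuler_apply, ← Ring.mul_inverse_cancel_left Q (gradedEuler w ν Q) hQ, this,
      mul_zero]
  refine eq_zero_of_gauge_equation (R := fun a => gradedEuler w ν (Ω' a) - Ω' a - Ω' a) hΩ'
    (fun a => sub_mem (sub_mem (gradedEuler_mem_matrix w
      (fun _ => weightHom_mem_constSeries _) hν (hΩ' a)) (hΩ' a)) (hΩ' a))
    (mul_mem hP (gradedEuler_mem_matrix w (fun _ => weightHom_mem_polySeries _)
      (fun i j => constSeries_le_polySeries (hν i j)) hQpoly))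
    (by rw [Matrix.map_mul, map_constantCoeff_gradedEuler w ν hQcc, mul_zero]) fun a => ?_
  exact gauge_equation_of_isLeibniz (isLeibniz_gradedEuler w ν)
    (IsLeibniz.mapMatrix fun x y => thetaHom_mul a x y) (gradedEuler_thetaMat w a μ)
    (gradedEuler_hbarA_smul w ν) hQ ((gradedEuler_apply w ν (Ω a)).trans (hgrade a)) rfl rfl

/-- **The canonical gauge transformation is degree-preserving** (graded
canonical frame Theorem).  Let `Ω_a ∈ Mat_n(ℂ[ħ][[q]])` be flat with
`Ω_a|_{q=0}` independent of `ħ`, and of degree 2: `E(Ω_a) + [μ, Ω_a] = 2Ω_a`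
for `E = 2ħ∂/∂ħ + Σ_b w_b θ_b` and `μ ∈ Mat_n(ℂ)`.  Then the unique
`Q ∈ Mat_n(ℂ[ħ][[q]])` with `Q|_{q=0} = Id` making every
`Ω̂_a = Q⁻¹Ω_aQ + ħQ⁻¹θ_aQ` independent of `ħ` satisfies `E(Q) + [μ, Q] = 0`. -/
theorem canonical_gauge_graded {r n : ℕ} (hr : 1 ≤ r) (hn : 1 ≤ n)
    (Ω : Fin r → Matrix (Fin n) (Fin n) (AA r))
    (hpoly : ∀ a, MatPolyH (Ω a))
    (hflat : IsFlat Ω)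
    (hcc : ∀ a i j, isConstH (ccA (Ω a i j)))
    (μ : Matrix (Fin n) (Fin n) ℂ) (w : Fin r → ℤ)
    (hgrade : ∀ a, eulerMat w (Ω a) + μ.map (cA r) * Ω a - Ω a * μ.map (cA r)
      = Ω a + Ω a)
    (Q : Matrix (Fin n) (Fin n) (AA r))
    (hQpoly : MatPolyH Q) (hQcc : Q.map ccA = 1)
    (hQgauge : ∀ a, MatConstH
      (Ring.inverse Q * Ω a * Q + hbarA r • (Ring.inverse Q * thetaMat a Q))) :
    eulerMat w Q + μ.map (cA r) * Q - Q * μ.map (cA r) = 0 :=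
  canonical_gauge_graded_general Ω μ w hgrade Q hQpoly hQcc hQgauge
end
end
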